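/- arXiv:2406.11747 — 4 statements merged into one kernel-verified Lean document; each statement's English description precedes it below -/
import Mathlib

section
/- Let H be a separable complex Hilbert space and let s be a selfadjoint bounded operator on H with 0 ≤ s ≤ 1. Then s - s² is trace class if and only if there exists an orthogonal projection e on H commuting with s such that s - e is trace class. -/
open scoped InnerProductSpace

/-- An orthogonal projection on a complex Hilbert space: a bounded operator `e`
with `e = e*` and `e = e²`. -/
def IsOrthogonalProjection {H : Type*} [NormedAddCommGroup H] [InnerProductSpace ℂ H]
    [CompleteSpace H] (e : H →L[ℂ] H) : Prop :=
  IsSelfAdjoint e ∧ e * e = e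

/-- A bounded operator `T` on a Hilbert space is trace class if for some Hilbert
(orthonormal) basis `(eᵢ)` the sum `Σᵢ ⟨eᵢ, √(T*T) eᵢ⟩` is finite. -/
def IsTraceClass {H : Type*} [NormedAddCommGroup H] [InnerProductSpace ℂ H]
    [CompleteSpace H] (T : H →L[ℂ] H) : Prop :=
  ∃ (ι : Type) (b : HilbertBasis ι ℂ H),
    Summable fun i => (⟪b i, (CFC.sqrt (star T * T)) (b i)⟫_ℂ).re

section Aux

open ContinuousLinearMap

set_option maxHeartbeats 1000000
set_option synthInstance.maxHeartbeats 400000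

variable {H : Type*} [NormedAddCommGroup H] [InnerProductSpace ℂ H] [CompleteSpace H]

lemma TCaux.inner_re_nonneg {A : H →L[ℂ] H} (hA : 0 ≤ A) (x : H) : 0 ≤ (⟪x, A x⟫_ℂ).re := by
  rw [nonneg_iff_isPositive] at hA
  simpa using hA.re_inner_nonneg_right x

lemma TCaux.inner_re_mono {A B : H →L[ℂ] H} (hAB : A ≤ B) (x : H) :
    (⟪x, A x⟫_ℂ).re ≤ (⟪x, B x⟫_ℂ).re := by
  have h := TCaux.inner_re_nonneg (sub_nonneg.mpr hAB) x
  rw [sub_apply, inner_sub_right] at h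
  simpa using h

lemma TCaux.spectrum_mem (s : H →L[ℂ] H) (h0 : 0 ≤ s) (h1 : s ≤ 1) :
    ∀ x ∈ spectrum ℝ s, 0 ≤ x ∧ x ≤ 1 := by
  intro x hx
  refine ⟨spectrum_nonneg_of_nonneg h0 hx, ?_⟩
  have h1' : s ≤ algebraMap ℝ (H →L[ℂ] H) 1 := by simpa using h1
  exact (le_algebraMap_iff_spectrum_le (a := s)).mp h1' x hx

lemma TCaux.pos_of_proj {e G : H →L[ℂ] H} (he : IsSelfAdjoint e) (hee : e * e = e)
    (hG : IsSelfAdjoint G) (hc : e * G = G * e)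
    (h : ∀ x, e x = x → 0 ≤ (⟪x, G x⟫_ℂ).re) : 0 ≤ e * G := by
  rw [nonneg_iff_isPositive]
  constructor
  · rw [isSelfAdjoint_iff] at *
    rw [← isSelfAdjoint_iff_isSymmetric, isSelfAdjoint_iff, star_mul, he, hG, ← hc]
  · intro x
    have heg : e * G = e * G * e := by
      rw [mul_assoc, ← hc, ← mul_assoc, hee]
    have hx : e (e x) = e x := by
      have := congrFun (congrArg DFunLike.coe hee) x
      simpa using this
    have h2 := h (e x) hx
    rw [reApplyInnerSelf_apply]
    have happ : (e * G) x = e (G (e x)) := by rw [heg]; rfl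
    rw [happ]
    have hsym := (isSelfAdjoint_iff_isSymmetric).mp he
    have heq : ⟪e (G (e x)), x⟫_ℂ = ⟪G (e x), e x⟫_ℂ := hsym (G (e x)) x
    rw [heq]
    rwa [← inner_conj_symm, Complex.conj_re] at h2

lemma TCaux.ker_orth_eq_closure_range (T : H →L[ℂ] H) (hT : IsSelfAdjoint T) :
    (LinearMap.ker (T : H →ₗ[ℂ] H))ᗮ = (LinearMap.range (T : H →ₗ[ℂ] H)).topologicalClosure := by
  have hsym : ∀ a b : H, ⟪T a, b⟫_ℂ = ⟪a, T b⟫_ℂ := fun a b =>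
    (isSelfAdjoint_iff_isSymmetric.mp hT) a b
  have h1 : (LinearMap.ker (T : H →ₗ[ℂ] H) : Submodule ℂ H) = (LinearMap.range (T : H →ₗ[ℂ] H))ᗮ := by
    ext y
    simp only [LinearMap.mem_ker, Submodule.mem_orthogonal]
    constructor
    · rintro hy u ⟨z, rfl⟩
      show ⟪T z, y⟫_ℂ = 0
      rw [hsym z y, show T y = 0 from hy, inner_zero_right]
    · intro hy
      have h2 : ⟪T y, T y⟫_ℂ = 0 :=
        (hsym (T y) y).symm.trans (hy (T (T y)) ⟨T y, rfl⟩)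
      exact inner_self_eq_zero.mp h2
  rw [h1, Submodule.orthogonal_orthogonal_eq_closure]

lemma TCaux.inner_cfc_nonneg_of_orth_ker (s : H →L[ℂ] H) (hsa : IsSelfAdjoint s)
    (f g : ℝ → ℝ) (hf : Continuous f) (hg : Continuous g)
    (h : ∀ x ∈ spectrum ℝ s, 0 ≤ f x * g x * f x)
    (x : H) (hx : x ∈ (LinearMap.ker ((cfc f s : H →L[ℂ] H) : H →ₗ[ℂ] H))ᗮ) : 0 ≤ (⟪x, (cfc g s) x⟫_ℂ).re := by
  set T := cfc f s with hT
  have hTsa : IsSelfAdjoint T := cfc_predicate f s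
  have hsym : ∀ a b : H, ⟪T a, b⟫_ℂ = ⟪a, T b⟫_ℂ := fun a b =>
    (isSelfAdjoint_iff_isSymmetric.mp hTsa) a b
  rw [TCaux.ker_orth_eq_closure_range T hTsa] at hx
  set G := cfc g s with hG
  have hclosed : IsClosed {y : H | 0 ≤ (⟪y, G y⟫_ℂ).re} := by
    have hcont : Continuous fun y : H => (⟪y, G y⟫_ℂ).re :=
      Complex.continuous_re.comp (Continuous.inner continuous_id G.continuous)
    exact isClosed_le continuous_const hcont
  have hsub : (LinearMap.range (T : H →ₗ[ℂ] H) : Set H) ⊆ {y : H | 0 ≤ (⟪y, G y⟫_ℂ).re} := by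
    rintro _ ⟨z, rfl⟩
    have hfgf : 0 ≤ cfc (fun x => f x * g x * f x) s := cfc_nonneg h
    have hmul : T * G * T = cfc (fun x => f x * g x * f x) s := by
      rw [hT, hG, cfc_mul (fun x => f x * g x) f s
        (((hf.mul hg).continuousOn)) (hf.continuousOn),
        cfc_mul f g s (hf.continuousOn) (hg.continuousOn)]
    have key : (⟪T z, G (T z)⟫_ℂ) = ⟪z, (T * G * T) z⟫_ℂ := by
      rw [hsym z (G (T z))]
      rfl
    have h0 : 0 ≤ (⟪z, (T * G * T) z⟫_ℂ).re := by
      rw [hmul]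
      rw [nonneg_iff_isPositive] at hfgf
      simpa using hfgf.re_inner_nonneg_right z
    show (0:ℝ) ≤ (⟪T z, G (T z)⟫_ℂ).re
    rw [key]
    exact h0
  have hx' : x ∈ closure (LinearMap.range (T : H →ₗ[ℂ] H) : Set H) := by
    rw [← Submodule.topologicalClosure_coe]
    exact hx
  exact closure_minimal hsub hclosed hx'

lemma TCaux.inner_cfc_nonneg_of_ker (s : H →L[ℂ] H) (hsa : IsSelfAdjoint s)
    (f g : ℝ → ℝ) (hf : Continuous f) (hg : Continuous g) (c : ℝ)
    (h : ∀ x ∈ spectrum ℝ s, 0 ≤ g x + c * f x)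
    (x : H) (hx : cfc f s x = 0) : 0 ≤ (⟪x, (cfc g s) x⟫_ℂ).re := by
  have hadd : cfc (fun y => g y + c * f y) s = cfc g s + c • cfc f s := by
    rw [cfc_add (a := s) g (fun y => c * f y) (hg.continuousOn)
      ((continuous_const.mul hf).continuousOn), cfc_const_mul c f s (hf.continuousOn)]
  have happ : (cfc g s) x = (cfc (fun y => g y + c * f y) s) x := by
    rw [hadd, add_apply, smul_apply, hx, smul_zero, add_zero]
  rw [happ]
  have hpos : 0 ≤ cfc (fun y => g y + c * f y) s := cfc_nonneg h
  rw [nonneg_iff_isPositive] at hpos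
  simpa using hpos.re_inner_nonneg_right x

lemma TCaux.P_nonneg (s e : H →L[ℂ] H) (h0 : 0 ≤ s) (h1 : s ≤ 1)
    (hesa : IsSelfAdjoint e) (hee : e * e = e) (hc : e * s = s * e) :
    0 ≤ e * (1 - s) + (1 - e) * s := by
  have hse : s * e = e * s := hc.symm
  have hee2 : ∀ x : H →L[ℂ] H, e * (e * x) = e * x := fun x => by rw [← mul_assoc, hee]
  have hse2 : ∀ x : H →L[ℂ] H, s * (e * x) = e * (s * x) := fun x => by
    rw [← mul_assoc, hse, mul_assoc]
  have hA : 0 ≤ e * (1 - s) := by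
    have hconj := star_left_conjugate_nonneg (sub_nonneg.mpr h1) e
    rw [hesa.star_eq] at hconj
    have heq : e * (1 - s) * e = e * (1 - s) := by
      simp only [mul_sub, sub_mul, mul_one, one_mul, hee, mul_assoc, hse, hee2]
    rwa [heq] at hconj
  have hB : 0 ≤ (1 - e) * s := by
    have hconj := star_left_conjugate_nonneg h0 (1 - e)
    have h1esa : IsSelfAdjoint (1 - e) := IsSelfAdjoint.sub (by simp) hesa
    rw [h1esa.star_eq] at hconj
    have heq : (1 - e) * s * (1 - e) = (1 - e) * s := by
      simp only [mul_sub, sub_mul, mul_one, one_mul, hee, mul_assoc, hse, hee2, hse2]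
      abel
    rwa [heq] at hconj
  exact add_nonneg hA hB

lemma TCaux.sqrt_sub_proj (s e : H →L[ℂ] H) (hsa : IsSelfAdjoint s) (h0 : 0 ≤ s) (h1 : s ≤ 1)
    (hesa : IsSelfAdjoint e) (hee : e * e = e) (hc : e * s = s * e) :
    CFC.sqrt (star (s - e) * (s - e)) = e * (1 - s) + (1 - e) * s := by
  have hse : s * e = e * s := hc.symm
  have hee2 : ∀ x : H →L[ℂ] H, e * (e * x) = e * x := fun x => by rw [← mul_assoc, hee]
  have hse2 : ∀ x : H →L[ℂ] H, s * (e * x) = e * (s * x) := fun x => by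
    rw [← mul_assoc, hse, mul_assoc]
  have hP0 := TCaux.P_nonneg s e h0 h1 hesa hee hc
  have key : star (s - e) * (s - e) = (e * (1 - s) + (1 - e) * s) ^ 2 := by
    have hster : star (s - e) = s - e := (hsa.sub hesa).star_eq
    rw [hster, pow_two]
    simp only [mul_sub, sub_mul, mul_add, add_mul, mul_one, one_mul, mul_assoc, hse2, hee2,
      hse, hee]
    abel
  rw [key, CFC.sqrt_sq _ hP0]

lemma TCaux.sqrt_pos_op (t : H →L[ℂ] H) (ht : 0 ≤ t) : CFC.sqrt (star t * t) = t := by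
  have hster : star t = t := (IsSelfAdjoint.of_nonneg ht).star_eq
  rw [hster, ← pow_two, CFC.sqrt_sq t ht]

end Aux

section Main

open ContinuousLinearMap

set_option maxHeartbeats 2000000 in
set_option synthInstance.maxHeartbeats 400000 in
/-- Let `s` be a selfadjoint bounded operator on a separable complex Hilbert space
with `0 ≤ s ≤ 1`. Then `s - s²` is trace class if and only if there exists an
orthogonal projection `e` commuting with `s` such that `s - e` is trace class. -/
theorem traceClass_sub_sq_iff_exists_proj
    {H : Type*} [NormedAddCommGroup H] [InnerProductSpace ℂ H] [CompleteSpace H]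
    [TopologicalSpace.SeparableSpace H]
    (s : H →L[ℂ] H) (hsa : IsSelfAdjoint s) (h0 : 0 ≤ s) (h1 : s ≤ 1) :
    IsTraceClass (s - s * s) ↔
      ∃ e : H →L[ℂ] H, IsOrthogonalProjection e ∧ Commute e s ∧ IsTraceClass (s - e) := by
  classical
  have hspec := TCaux.spectrum_mem s h0 h1
  -- basic cfc computations
  have hid : cfc (fun x : ℝ => x) s = s := cfc_id' ℝ s
  have hsq : cfc (fun x : ℝ => x * x) s = s * s := by
    rw [cfc_mul (fun x : ℝ => x) (fun x : ℝ => x) s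
      (continuous_id.continuousOn) (continuous_id.continuousOn), hid]
  have ht : cfc (fun x : ℝ => x - x * x) s = s - s * s := by
    rw [cfc_sub (fun x : ℝ => x) (fun x : ℝ => x * x) s
      (continuous_id.continuousOn) (by fun_prop), hid, hsq]
  have hone : cfc (fun _ : ℝ => (1:ℝ)) s = 1 := by
    rw [cfc_const (1:ℝ) s, map_one]
  have hones : cfc (fun x : ℝ => 1 - x) s = 1 - s := by
    rw [cfc_sub (fun _ : ℝ => (1:ℝ)) (fun x : ℝ => x) s
      (continuous_const.continuousOn) (continuous_id.continuousOn), hone, hid]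
  have ht0 : 0 ≤ s - s * s := by
    rw [← ht]
    refine cfc_nonneg fun x hx => ?_
    obtain ⟨hx0, hx1⟩ := hspec x hx
    nlinarith
  set t : H →L[ℂ] H := s - s * s with htdef
  have hsqrt_t : CFC.sqrt (star t * t) = t := TCaux.sqrt_pos_op t ht0
  constructor
  · -- forward direction
    rintro ⟨ι, b, hsum⟩
    rw [hsqrt_t] at hsum
    -- construct the spectral projection
    set f : ℝ → ℝ := fun x => max (x - 1/2) 0 with hfdef
    have hfcont : Continuous f := (continuous_id.sub continuous_const).max continuous_const
    set T : H →L[ℂ] H := cfc f s with hTdef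
    have hTsa : IsSelfAdjoint T := cfc_predicate f s
    have hTs : T * s = s * T := by
      have h₁ : cfc (fun x : ℝ => f x * x) s = cfc f s * cfc (fun x : ℝ => x) s :=
        cfc_mul f (fun x : ℝ => x) s (hfcont.continuousOn) (continuous_id.continuousOn)
      have h₂ : cfc (fun x : ℝ => x * f x) s = cfc (fun x : ℝ => x) s * cfc f s :=
        cfc_mul (fun x : ℝ => x) f s (continuous_id.continuousOn) (hfcont.continuousOn)
      have h₃ : cfc (fun x : ℝ => f x * x) s = cfc (fun x : ℝ => x * f x) s :=
        cfc_congr fun x _ => mul_comm _ _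
      rw [hid] at h₁ h₂
      rw [hTdef, ← h₁, h₃, h₂]
    set N : Submodule ℂ H := LinearMap.ker (T : H →ₗ[ℂ] H) with hN
    have hNclosed : IsClosed (N : Set H) := ContinuousLinearMap.isClosed_ker T
    haveI : CompleteSpace N := hNclosed.completeSpace_coe
    set U : Submodule ℂ H := Nᗮ with hU
    set e : H →L[ℂ] H := U.subtypeL ∘L U.orthogonalProjectionOnto with he
    have hesa : IsSelfAdjoint e := isSelfAdjoint_starProjection U
    have happ : ∀ x : H, e x = U.orthogonalProjectionOnto x := fun x => rfl
    have hee : e * e = e := by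
      ext x
      show e (e x) = e x
      rw [happ x, happ (U.orthogonalProjectionOnto x), Submodule.orthogonalProjectionOnto_mem_subspace_eq_self]
    have heU : ∀ x : H, x ∈ U → e x = x := fun x hx => by
      rw [happ x]; exact (Submodule.starProjection_eq_self_iff (K := U)).mpr hx
    have heN : ∀ x : H, x ∈ N → e x = 0 := fun x hx => by
      rw [happ x, Submodule.orthogonalProjectionOnto_apply_of_mem_orthogonal (N.le_orthogonal_orthogonal hx),
        Submodule.coe_zero]
    have hsN : ∀ x : H, x ∈ N → s x ∈ N := fun x hx => by
      have hTsx : T (s x) = s (T x) := by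
        have := congrFun (congrArg DFunLike.coe hTs) x
        simpa using this
      have hx' : T x = 0 := hx
      show T (s x) = 0
      rw [hTsx, hx', map_zero]
    have hsU : ∀ x : H, x ∈ U → s x ∈ U := fun x hx => by
      rw [hU, Submodule.mem_orthogonal] at hx ⊢
      intro v hv
      have hsym : ⟪s v, x⟫_ℂ = ⟪v, s x⟫_ℂ := (isSelfAdjoint_iff_isSymmetric.mp hsa) v x
      rw [← hsym]
      exact hx (s v) (hsN v hv)
    have hdecomp : ∀ x : H, x - e x ∈ N := fun x => by
      have hmem : x - e x ∈ Uᗮ := by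
        rw [happ x]; exact Submodule.sub_starProjection_mem_orthogonal (K := U) x
      rwa [hU, Submodule.orthogonal_orthogonal] at hmem
    have hcomm : e * s = s * e := by
      ext x
      show e (s x) = s (e x)
      have hx : x = e x + (x - e x) := by abel
      have hmem : e x ∈ U := by rw [happ x]; exact Submodule.coe_mem _
      calc e (s x) = e (s (e x + (x - e x))) := by rw [← hx]
        _ = e (s (e x)) + e (s (x - e x)) := by rw [map_add, map_add]
        _ = s (e x) + 0 := by rw [heU _ (hsU _ hmem), heN _ (hsN _ (hdecomp x))]
        _ = s (e x) := add_zero _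
    -- membership characterizations
    have hfix : ∀ x : H, e x = x → x ∈ (LinearMap.ker (T : H →ₗ[ℂ] H))ᗮ := fun x hx => by
      rw [← hN, ← hU, ← Submodule.starProjection_eq_self_iff (K := U)]
      rw [happ x] at hx
      exact hx
    have hker : ∀ x : H, e x = 0 → T x = 0 := fun x hx => by
      have hmem : x ∈ Uᗮ := by
        have h2 : x - e x ∈ Uᗮ := by
          rw [happ x]; exact Submodule.sub_starProjection_mem_orthogonal (K := U) x
        rwa [hx, sub_zero] at h2
      rw [hU, Submodule.orthogonal_orthogonal] at hmem
      exact hmem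
    -- the operators G₁ and G₂
    set G₁ : H →L[ℂ] H := (t + t) - (1 - s) with hG1def
    set G₂ : H →L[ℂ] H := (t + t) - s with hG2def
    have hG1cfc : cfc (fun x : ℝ => ((x - x * x) + (x - x * x)) - (1 - x)) s = G₁ := by
      rw [cfc_sub (fun x : ℝ => (x - x * x) + (x - x * x)) (fun x : ℝ => 1 - x) s
        (by fun_prop) (by fun_prop),
        cfc_add (a := s) (fun x : ℝ => x - x * x) (fun x : ℝ => x - x * x)
        (by fun_prop) (by fun_prop), ht, hones, hG1def, htdef]
    have hG2cfc : cfc (fun x : ℝ => ((x - x * x) + (x - x * x)) - x) s = G₂ := by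
      rw [cfc_sub (fun x : ℝ => (x - x * x) + (x - x * x)) (fun x : ℝ => x) s
        (by fun_prop) (continuous_id.continuousOn),
        cfc_add (a := s) (fun x : ℝ => x - x * x) (fun x : ℝ => x - x * x)
        (by fun_prop) (by fun_prop), ht, hid, hG2def, htdef]
    have hG1sa : IsSelfAdjoint G₁ := by
      rw [hG1def, htdef]
      simp only [isSelfAdjoint_iff, star_sub, star_add, star_mul, star_one, hsa.star_eq]
    have hG2sa : IsSelfAdjoint G₂ := by
      rw [hG2def, htdef]
      simp only [isSelfAdjoint_iff, star_sub, star_add, star_mul, star_one, hsa.star_eq]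
    have hces : Commute e s := hcomm
    have hceG1 : e * G₁ = G₁ * e := by
      have : Commute e G₁ := by
        rw [hG1def, htdef]
        exact (((hces.sub_right (hces.mul_right hces)).add_right
          (hces.sub_right (hces.mul_right hces))).sub_right
          ((Commute.one_right e).sub_right hces))
      exact this
    have hceG2 : e * G₂ = G₂ * e := by
      have : Commute e G₂ := by
        rw [hG2def, htdef]
        exact (((hces.sub_right (hces.mul_right hces)).add_right
          (hces.sub_right (hces.mul_right hces))).sub_right hces)
      exact this
    -- positivity of e * G₁
    have hpos1 : 0 ≤ e * G₁ := by
      refine TCaux.pos_of_proj hesa hee hG1sa hceG1 fun x hx => ?_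
      rw [← hG1cfc]
      refine TCaux.inner_cfc_nonneg_of_orth_ker s hsa f _ hfcont (by fun_prop) ?_ x (hfix x hx)
      intro y hy
      obtain ⟨hy0, hy1⟩ := hspec y hy
      rcases le_or_gt y (1/2) with hc2 | hc2
      · have : f y = 0 := max_eq_right (by linarith)
        rw [this]
        simp
      · have hfy : f y = y - 1/2 := max_eq_left (by linarith)
        rw [hfy]
        have hB : 0 ≤ (1 - y) * (2*y - 1) := mul_nonneg (by linarith) (by linarith)
        nlinarith [mul_nonneg (mul_self_nonneg (y - 1/2)) hB]
    -- positivity of (1 - e) * G₂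
    have h1esa : IsSelfAdjoint (1 - e : H →L[ℂ] H) := IsSelfAdjoint.sub (by simp) hesa
    have h1ee : (1 - e) * (1 - e) = (1 - e : H →L[ℂ] H) := by
      simp only [mul_sub, sub_mul, mul_one, one_mul, hee]
      abel
    have hc1eG2 : (1 - e) * G₂ = G₂ * (1 - e) := by
      simp only [sub_mul, mul_sub, one_mul, mul_one, hceG2]
    have hpos2 : 0 ≤ (1 - e) * G₂ := by
      refine TCaux.pos_of_proj h1esa h1ee hG2sa hc1eG2 fun x hx => ?_
      have hex : e x = 0 := by
        have := congrFun (congrArg DFunLike.coe (rfl : (1 - e : H →L[ℂ] H) = 1 - e)) x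
        have hx' : x - e x = x := by
          have : (1 - e : H →L[ℂ] H) x = x - e x := by
            simp [sub_apply, one_apply]
          rw [← this, hx]
        have := sub_eq_self.mp hx'
        exact this
      rw [← hG2cfc]
      refine TCaux.inner_cfc_nonneg_of_ker s hsa f _ hfcont (by fun_prop) 2 ?_ x (hker x hex)
      intro y hy
      obtain ⟨hy0, hy1⟩ := hspec y hy
      rcases le_or_gt y (1/2) with hc2 | hc2
      · have : f y = 0 := max_eq_right (by linarith)
        rw [this]
        nlinarith
      · have hfy : f y = y - 1/2 := max_eq_left (by linarith)
        rw [hfy]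
        nlinarith
    -- the inequality P ≤ t + t
    set P : H →L[ℂ] H := e * (1 - s) + (1 - e) * s with hPdef
    have hPident : (t + t) - P = e * G₁ + (1 - e) * G₂ := by
      rw [hPdef, hG1def, hG2def]
      noncomm_ring
    have hPle : P ≤ t + t := by
      rw [← sub_nonneg, hPident]
      exact add_nonneg hpos1 hpos2
    have hP0 : 0 ≤ P := TCaux.P_nonneg s e h0 h1 hesa hee hcomm
    refine ⟨e, ⟨hesa, hee⟩, hces, ι, b, ?_⟩
    rw [TCaux.sqrt_sub_proj s e hsa h0 h1 hesa hee hcomm, ← hPdef]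
    refine Summable.of_nonneg_of_le (fun i => TCaux.inner_re_nonneg hP0 _) (fun i => ?_)
      (hsum.add hsum)
    refine le_trans (TCaux.inner_re_mono hPle _) (le_of_eq ?_)
    simp [add_apply, inner_add_right]
  · -- reverse direction
    rintro ⟨e, ⟨hesa, hee⟩, hces, ι, b, hsum⟩
    have hcomm : e * s = s * e := hces
    rw [TCaux.sqrt_sub_proj s e hsa h0 h1 hesa hee hcomm] at hsum
    set P : H →L[ℂ] H := e * (1 - s) + (1 - e) * s with hPdef
    set G₃ : H →L[ℂ] H := ((1 - s) + (1 - s)) - t with hG3def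
    set G₄ : H →L[ℂ] H := (s + s) - t with hG4def
    have hG3cfc : cfc (fun x : ℝ => ((1 - x) + (1 - x)) - (x - x * x)) s = G₃ := by
      rw [cfc_sub (fun x : ℝ => (1 - x) + (1 - x)) (fun x : ℝ => x - x * x) s
        (by fun_prop) (by fun_prop),
        cfc_add (a := s) (fun x : ℝ => 1 - x) (fun x : ℝ => 1 - x) (by fun_prop) (by fun_prop),
        hones, ht, hG3def, htdef]
    have hG4cfc : cfc (fun x : ℝ => (x + x) - (x - x * x)) s = G₄ := by
      rw [cfc_sub (fun x : ℝ => x + x) (fun x : ℝ => x - x * x) s (by fun_prop) (by fun_prop),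
        cfc_add (a := s) (fun x : ℝ => x) (fun x : ℝ => x)
        (continuous_id.continuousOn) (continuous_id.continuousOn), hid, ht, hG4def, htdef]
    have hG30 : 0 ≤ G₃ := by
      rw [← hG3cfc]
      refine cfc_nonneg fun x hx => ?_
      obtain ⟨hx0, hx1⟩ := hspec x hx
      nlinarith
    have hG40 : 0 ≤ G₄ := by
      rw [← hG4cfc]
      refine cfc_nonneg fun x hx => ?_
      obtain ⟨hx0, hx1⟩ := hspec x hx
      nlinarith
    have hG3sa : IsSelfAdjoint G₃ := IsSelfAdjoint.of_nonneg hG30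
    have hG4sa : IsSelfAdjoint G₄ := IsSelfAdjoint.of_nonneg hG40
    have hceG3 : e * G₃ = G₃ * e := by
      have : Commute e G₃ := by
        rw [hG3def, htdef]
        exact (((Commute.one_right e).sub_right hces).add_right
          ((Commute.one_right e).sub_right hces)).sub_right
          (hces.sub_right (hces.mul_right hces))
      exact this
    have hceG4 : e * G₄ = G₄ * e := by
      have : Commute e G₄ := by
        rw [hG4def, htdef]
        exact (hces.add_right hces).sub_right (hces.sub_right (hces.mul_right hces))
      exact this
    have hpos3 : 0 ≤ e * G₃ :=
      TCaux.pos_of_proj hesa hee hG3sa hceG3 fun x _ => TCaux.inner_re_nonneg hG30 x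
    have h1esa : IsSelfAdjoint (1 - e : H →L[ℂ] H) := IsSelfAdjoint.sub (by simp) hesa
    have h1ee : (1 - e) * (1 - e) = (1 - e : H →L[ℂ] H) := by
      simp only [mul_sub, sub_mul, mul_one, one_mul, hee]
      abel
    have hc1eG4 : (1 - e) * G₄ = G₄ * (1 - e) := by
      simp only [sub_mul, mul_sub, one_mul, mul_one, hceG4]
    have hpos4 : 0 ≤ (1 - e) * G₄ :=
      TCaux.pos_of_proj h1esa h1ee hG4sa hc1eG4 fun x _ => TCaux.inner_re_nonneg hG40 x
    have hident : (P + P) - t = e * G₃ + (1 - e) * G₄ := by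
      rw [hPdef, hG3def, hG4def]
      noncomm_ring
    have htle : t ≤ P + P := by
      rw [← sub_nonneg, hident]
      exact add_nonneg hpos3 hpos4
    refine ⟨ι, b, ?_⟩
    rw [hsqrt_t]
    refine Summable.of_nonneg_of_le (fun i => TCaux.inner_re_nonneg ht0 _) (fun i => ?_)
      (hsum.add hsum)
    refine le_trans (TCaux.inner_re_mono htle _) (le_of_eq ?_)
    simp [ContinuousLinearMap.add_apply, inner_add_right]

end Main
end

section
/- Let H be a finite-dimensional complex inner product space and let p and q be orthogonal projections on H with p ≠ q. Then there exist real numbers a, b with 0 ≤ a < b ≤ 1 such that the closed interval [a, b] is contained in the union over μ ∈ [0,1] of the spectra of the operators μ p + (1-μ) q. -/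
lemma mem_spectrum_of_eigenvector {H : Type*} [NormedAddCommGroup H] [InnerProductSpace ℂ H]
    (T : H →L[ℂ] H) (x : ℂ) (w : H) (hw : w ≠ 0) (h : T w = x • w) :
    x ∈ spectrum ℂ T := by
  rw [spectrum.mem_iff]
  intro hunit
  obtain ⟨B, hB⟩ := hunit.exists_left_inv
  apply hw
  have h0 : ((algebraMap ℂ (H →L[ℂ] H)) x - T) w = 0 := by
    simp [ContinuousLinearMap.sub_apply, h, Algebra.algebraMap_eq_smul_one]
  calc w = ((1 : H →L[ℂ] H)) w := rfl
    _ = (B * ((algebraMap ℂ (H →L[ℂ] H)) x - T)) w := by rw [hB]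
    _ = B (((algebraMap ℂ (H →L[ℂ] H)) x - T) w) := rfl
    _ = 0 := by rw [h0]; simp

local notation "⟪" x ", " y "⟫" => @inner ℂ _ _ x y

lemma core {H : Type*} [NormedAddCommGroup H] [InnerProductSpace ℂ H]
    [FiniteDimensional ℂ H]
    (p q : H →L[ℂ] H) (hp : IsOrthogonalProjection p) (hq : IsOrthogonalProjection q)
    (t : ℝ) (ht : 0 < t) (v : H) (hv : v ≠ 0) (hpv : p v = v)
    (hpqv : p (q v) = ((1 - t : ℝ) : ℂ) • v) :
    ∃ a b : ℝ, 0 ≤ a ∧ a < b ∧ b ≤ 1 ∧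
      ∀ x ∈ Set.Icc a b, ∃ μ ∈ Set.Icc (0:ℝ) 1,
        (x : ℂ) ∈ spectrum ℂ ((μ : ℂ) • p + ((1 - μ : ℝ) : ℂ) • q) := by
  set u := q v with hu_def
  have hqu : q u = u := by
    have := ContinuousLinearMap.ext_iff.mp hq.2 v
    simpa [ContinuousLinearMap.mul_apply] using this
  have hpu : p u = ((1 - t : ℝ) : ℂ) • v := hpqv
  -- ‖u‖² = (1-t)‖v‖²
  have hqs := hq.1.isSymmetric
  have hps := hp.1.isSymmetric
  have hinner : ⟪v, u⟫ = ((1 - t : ℝ) : ℂ) * ⟪v, v⟫ := by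
    calc ⟪v, u⟫ = ⟪p v, q v⟫ := by rw [hpv]
      _ = ⟪v, p (q v)⟫ := hps (v) (q v)
      _ = ((1 - t : ℝ) : ℂ) * ⟪v, v⟫ := by rw [hpqv, inner_smul_right]
  have hnu : (‖u‖ ^ 2 : ℝ) = (1 - t) * ‖v‖ ^ 2 := by
    have h1 : ⟪u, u⟫ = ⟪v, u⟫ := by
      calc ⟪u, u⟫ = ⟪q v, q v⟫ := rfl
        _ = ⟪v, q (q v)⟫ := hqs v (q v)
        _ = ⟪v, u⟫ := by rw [hqu]
    have h2 := h1.trans hinner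
    rw [inner_self_eq_norm_sq_to_K (𝕜 := ℂ) u, inner_self_eq_norm_sq_to_K (𝕜 := ℂ) v] at h2
    have h2' : ((‖u‖ : ℝ) : ℂ) ^ 2 = ((1 - t : ℝ) : ℂ) * ((‖v‖ : ℝ) : ℂ) ^ 2 := h2
    exact_mod_cast h2' 
  have hv2 : (0:ℝ) < ‖v‖ ^ 2 := by have := norm_pos_iff.mpr hv; positivity
  have ht1 : t ≤ 1 := by nlinarith [sq_nonneg ‖u‖]
  rcases eq_or_lt_of_le ht1 with heq | hlt
  · -- t = 1 : q v = 0, eigenvector v with μ = x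
    have hu0 : u = 0 := by
      have : ‖u‖ ^ 2 = 0 := by rw [hnu, ← heq]; ring
      simpa [pow_eq_zero_iff] using this
    refine ⟨1/4, 1/2, by norm_num, by norm_num, by norm_num, ?_⟩
    rintro x ⟨hx1, hx2⟩
    refine ⟨x, ⟨by linarith, by linarith⟩, ?_⟩
    apply mem_spectrum_of_eigenvector _ _ v hv
    simp only [ContinuousLinearMap.add_apply, ContinuousLinearMap.smul_apply, hpv,
      ← hu_def, hu0, smul_zero, add_zero]
  · -- 0 < t < 1
    have hu0 : u ≠ 0 := by
      intro h
      have h0 : (0:ℝ) = (1 - t) * ‖v‖ ^ 2 := by simpa [h] using hnu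
      nlinarith
    -- independence
    have hindep : ∀ α β : ℂ, α • v + β • u = 0 → α = 0 ∧ β = 0 := by
      intro α β h0
      have hq0 : (α + β) • u = 0 := by
        have := congrArg q h0
        simpa [map_add, map_smul, hqu, add_smul] using this
      have hab : α + β = 0 := by
        rcases smul_eq_zero.mp hq0 with h | h
        · exact h
        · exact absurd h hu0
      have hp0 : (α + β * ((1 - t : ℝ) : ℂ)) • v = 0 := by
        have := congrArg p h0
        simpa [map_add, map_smul, hpv, hpu, smul_smul, add_smul] using this
      have hab2 : α + β * ((1 - t : ℝ) : ℂ) = 0 := by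
        rcases smul_eq_zero.mp hp0 with h | h
        · exact h
        · exact absurd h hv
      have htC : (t : ℂ) ≠ 0 := by exact_mod_cast ht.ne'
      have hβ : β = 0 := by
        have : β * (t : ℂ) = 0 := by
          push_cast at hab2 ⊢
          linear_combination hab - hab2
        exact (mul_eq_zero.mp this).resolve_right htC
      exact ⟨by rw [hβ] at hab; simpa using hab, hβ⟩
    set s := Real.sqrt (1 - t) with hs_def
    have hs0 : 0 ≤ s := Real.sqrt_nonneg _
    have hs2 : s ^ 2 = 1 - t := Real.sq_sqrt (by linarith)
    have hs1 : s < 1 := by nlinarith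
    set lam := (1 - s) / 2 with hlam_def
    have hlam0 : 0 < lam := by simp only [hlam_def]; linarith
    have hlamhalf : lam ≤ 1/2 := by simp only [hlam_def]; linarith
    refine ⟨lam/2, lam, by linarith, by linarith, by linarith, ?_⟩
    rintro x ⟨hx1, hx2⟩
    have hx0 : 0 < x := by linarith
    have hxhalf : x ≤ 1/2 := le_trans hx2 hlamhalf
    have hkey : 4 * x * (1 - x) ≤ t := by nlinarith [mul_nonneg (sub_nonneg.mpr hx2) (by linarith : (0:ℝ) ≤ 1 - lam - x)]
    have hdiv0 : 0 ≤ 1 - 4 * x * (1 - x) / t := by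
      rw [sub_nonneg, div_le_one ht]; exact hkey
    set r := Real.sqrt (1 - 4 * x * (1 - x) / t) with hr_def
    have hr0 : 0 ≤ r := Real.sqrt_nonneg _
    have hr2 : r ^ 2 = 1 - 4 * x * (1 - x) / t := Real.sq_sqrt hdiv0
    have hxx : 0 < 4 * x * (1 - x) / t := by
      apply div_pos (by nlinarith) ht
    have hrsq : r ^ 2 < 1 := by linarith
    have hr1 : r < 1 := lt_of_pow_lt_pow_left₀ 2 zero_le_one (by rw [one_pow]; exact hrsq)
    set μ := (1 - r) / 2 with hμ_def
    have hμ0 : 0 < μ := by simp only [hμ_def]; linarith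
    have hμ1 : μ ≤ 1 := by simp only [hμ_def]; linarith
    have hkeyR : μ * (1 - μ) * t = x * (1 - x) := by
      have h1 : μ * (1 - μ) = (1 - r ^ 2) / 4 := by simp only [hμ_def]; ring
      rw [h1, hr2]
      field_simp
      ring
    have hkeyC : (μ : ℂ) * (1 - (μ : ℂ)) * (t : ℂ) = (x : ℂ) * (1 - (x : ℂ)) := by
      exact_mod_cast congrArg (Complex.ofReal) hkeyR
    refine ⟨μ, ⟨le_of_lt hμ0, hμ1⟩, ?_⟩
    set α := (μ : ℂ) * ((1 - t : ℝ) : ℂ) with hα_def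
    set β := (x : ℂ) - (μ : ℂ) with hβ_def
    set w := α • v + β • u with hw_def
    have hα0 : α ≠ 0 := by
      simp only [hα_def]
      apply mul_ne_zero
      · exact_mod_cast hμ0.ne'
      · exact_mod_cast (by linarith : (1:ℝ) - t ≠ 0)
    have hw0 : w ≠ 0 := by
      intro h
      exact hα0 (hindep α β h).1
    apply mem_spectrum_of_eigenvector _ _ w hw0
    have hpw : p w = (α + β * ((1 - t : ℝ) : ℂ)) • v := by
      simp only [hw_def, map_add, map_smul, hpv, hpu, smul_smul, add_smul]
    have hqw : q w = (α + β) • u := by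
      simp only [hw_def, map_add, map_smul, hqu, add_smul, ← hu_def]
    have : ((μ : ℂ) • p + ((1 - μ : ℝ) : ℂ) • q) w
        = ((μ : ℂ) * (α + β * ((1 - t : ℝ) : ℂ))) • v + (((1 - μ : ℝ) : ℂ) * (α + β)) • u := by
      simp only [ContinuousLinearMap.add_apply, ContinuousLinearMap.smul_apply, hpw, hqw,
        smul_smul]
    rw [this, hw_def, smul_add, smul_smul, smul_smul]
    congr 1
    · congr 1
      simp only [hα_def, hβ_def]
      push_cast
      ring
    · congr 1
      simp only [hα_def, hβ_def]
      push_cast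
      linear_combination -hkeyC

/-- Let `H` be a finite-dimensional complex inner product space and let `p ≠ q` be
orthogonal projections on `H`. Then there exist `0 ≤ a < b ≤ 1` such that the interval
`[a, b]` is contained in the union over `μ ∈ [0,1]` of the spectra of `μ p + (1-μ) q`. -/
theorem interval_subset_union_spectrum_convex_combination_of_projections
    {H : Type*} [NormedAddCommGroup H] [InnerProductSpace ℂ H] [FiniteDimensional ℂ H]
    (p q : H →L[ℂ] H) (hp : IsOrthogonalProjection p) (hq : IsOrthogonalProjection q)
    (hpq : p ≠ q) :
    ∃ a b : ℝ, 0 ≤ a ∧ a < b ∧ b ≤ 1 ∧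
      ∀ x ∈ Set.Icc a b, ∃ μ ∈ Set.Icc (0:ℝ) 1,
        (x : ℂ) ∈ spectrum ℂ ((μ : ℂ) • p + ((1 - μ : ℝ) : ℂ) • q) := by
  have hp2 : ∀ w, p (p w) = p w := fun w => ContinuousLinearMap.ext_iff.mp hp.2 w
  have hq2 : ∀ w, q (q w) = q w := fun w => ContinuousLinearMap.ext_iff.mp hq.2 w
  set B : H →L[ℂ] H := p - q with hB_def
  set A : H →L[ℂ] H := p + q - p * q - q * p with hA_def
  have hApplyA : ∀ w, A w = p w + q w - p (q w) - q (p w) := by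
    intro w
    simp [hA_def, ContinuousLinearMap.sub_apply, ContinuousLinearMap.add_apply,
      ContinuousLinearMap.mul_apply]
  have hBB : ∀ w, A w = B (B w) := by
    intro w
    simp only [hB_def, ContinuousLinearMap.sub_apply, map_sub, hApplyA, hp2, hq2]
    abel
  have hBsym : (B : H →ₗ[ℂ] H).IsSymmetric := (hp.1.sub hq.1).isSymmetric
  have hA_sa : IsSelfAdjoint A := by
    rw [hA_def]
    simp only [IsSelfAdjoint, star_sub, star_add, star_mul, hp.1.star_eq, hq.1.star_eq]
    abel
  have hAsym : (A : H →ₗ[ℂ] H).IsSymmetric := hA_sa.isSymmetric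
  -- A ≠ 0
  have hA0 : A ≠ 0 := by
    intro h
    apply hpq
    ext w
    have h1 : (inner ℂ (B w) (B w) : ℂ) = 0 := by
      have e1 : (inner ℂ (B w) (B w) : ℂ) = inner ℂ w (A w) := by
        rw [hBB w]; exact hBsym w (B w)
      rw [e1, h]
      simp
    have hBw0 : B w = 0 := inner_self_eq_zero.mp h1
    have : p w - q w = 0 := by
      simpa [hB_def, ContinuousLinearMap.sub_apply] using hBw0
    exact sub_eq_zero.mp this
  -- eigenvalue of A restricted to its range
  set Al : H →ₗ[ℂ] H := (A : H →ₗ[ℂ] H) with hAl_def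
  set S : Submodule ℂ H := LinearMap.range Al with hS_def
  have hrestrict : ∀ w ∈ S, Al w ∈ S := fun w _ => LinearMap.mem_range_self Al w
  set f : S →ₗ[ℂ] S := Al.restrict hrestrict with hf_def
  have hSne : Nontrivial S := by
    rw [Submodule.nontrivial_iff_ne_bot, hS_def, ne_eq, LinearMap.range_eq_bot]
    intro h
    exact hA0 (ContinuousLinearMap.coe_injective (by simpa using h))
  obtain ⟨c, hc⟩ := Module.End.exists_eigenvalue f
  obtain ⟨z0, hz0⟩ := hc.exists_hasEigenvector
  set z : H := (z0 : H) with hz_def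
  have hz0' : z ≠ 0 := fun h => hz0.right (Subtype.coe_injective (by simpa [hz_def] using h))
  have hAz : A z = c • z := by
    have := congrArg Subtype.val (Module.End.mem_eigenspace_iff.mp hz0.left)
    simpa [hf_def, LinearMap.restrict_apply, hz_def, hAl_def] using this
  -- c ≠ 0
  have hc0 : c ≠ 0 := by
    intro h
    apply hz0'
    obtain ⟨y, hy⟩ := z0.2
    have hAz0 : A z = 0 := by rw [hAz, h, zero_smul]
    have h1 : (inner ℂ z z : ℂ) = 0 := by
      calc (inner ℂ z z : ℂ) = inner ℂ (Al y) z := by rw [hy]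
        _ = inner ℂ (A y) z := rfl
        _ = inner ℂ y (A z) := hAsym y z
        _ = 0 := by rw [hAz0, inner_zero_right]
    simpa using inner_self_eq_zero.mp h1
  -- c is real and positive
  have hzn : (0:ℝ) < ‖z‖ ^ 2 := by have := norm_pos_iff.mpr hz0'; positivity
  have hinnerA : c * ((‖z‖ : ℝ) : ℂ) ^ 2 = ((‖B z‖ : ℝ) : ℂ) ^ 2 := by
    have h1 : (inner ℂ z (A z) : ℂ) = c * inner ℂ z z := by rw [hAz, inner_smul_right]
    have h2 : (inner ℂ z (A z) : ℂ) = inner ℂ (B z) (B z) := by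
      rw [hBB z]; exact (hBsym z (B z)).symm
    have h3 : (inner ℂ z z : ℂ) = ((‖z‖ : ℝ) : ℂ) ^ 2 := inner_self_eq_norm_sq_to_K z
    have h4 : (inner ℂ (B z) (B z) : ℂ) = ((‖B z‖ : ℝ) : ℂ) ^ 2 := inner_self_eq_norm_sq_to_K (B z)
    rw [← h3, ← h4, ← h1, h2]
  set t : ℝ := ‖B z‖ ^ 2 / ‖z‖ ^ 2 with ht_def
  have hct : c = (t : ℂ) := by
    rw [ht_def]
    push_cast
    rw [eq_div_iff (by exact_mod_cast hzn.ne')]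
    exact_mod_cast hinnerA
  have htne : t ≠ 0 := fun h => hc0 (by rw [hct, h]; simp)
  have htnonneg : 0 ≤ t := by
    rw [ht_def]; positivity
  have ht0 : 0 < t := htnonneg.lt_of_ne (Ne.symm htne)
  have hAzt : A z = ((t : ℝ) : ℂ) • z := by rw [hAz, hct]
  -- p z ≠ 0 or q z ≠ 0
  have hpzqz : p z ≠ 0 ∨ q z ≠ 0 := by
    by_contra h
    push_neg at h
    have : A z = 0 := by
      rw [hApplyA z, h.1, h.2]
      simp
    rw [hAzt] at this
    rcases smul_eq_zero.mp this with h' | h'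
    · exact ht0.ne' (by exact_mod_cast h')
    · exact hz0' h'
  rcases hpzqz with hpz | hqz
  · -- v := p z
    set v : H := p z with hv_def
    have hpv : p v = v := hp2 z
    have hAv : A v = ((t : ℝ) : ℂ) • v := by
      have lhs : A (p z) = p (A z) := by
        rw [hApplyA (p z), hApplyA z]
        simp only [map_add, map_sub, hp2, hq2]
        abel
      rw [hv_def, lhs, hAzt, map_smul]
    have hpqv : p (q v) = ((1 - t : ℝ) : ℂ) • v := by
      have h1 : A v = v - p (q v) := by
        rw [hApplyA v, hpv]
        abel
      have h2 : p (q v) = v - A v := by rw [h1]; abel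
      rw [h2, hAv]
      push_cast
      rw [sub_smul, one_smul]
    exact core p q hp hq t ht0 v hpz hpv hpqv
  · -- v := q z, swap roles
    set v : H := q z with hv_def
    have hqv : q v = v := hq2 z
    have hAv : A v = ((t : ℝ) : ℂ) • v := by
      have lhs : A (q z) = q (A z) := by
        rw [hApplyA (q z), hApplyA z]
        simp only [map_add, map_sub, hp2, hq2]
        abel
      rw [hv_def, lhs, hAzt, map_smul]
    have hqpv : q (p v) = ((1 - t : ℝ) : ℂ) • v := by
      have h1 : A v = v - q (p v) := by
        rw [hApplyA v, hqv]
        abel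
      have h2 : q (p v) = v - A v := by rw [h1]; abel
      rw [h2, hAv]
      push_cast
      rw [sub_smul, one_smul]
    obtain ⟨a, b, ha, hab, hb1, hmain⟩ := core q p hq hp t ht0 v hqz hqv hqpv
    refine ⟨a, b, ha, hab, hb1, ?_⟩
    intro x hx
    obtain ⟨μ, hμ, hspec⟩ := hmain x hx
    refine ⟨1 - μ, ⟨by linarith [hμ.2], by linarith [hμ.1]⟩, ?_⟩
    have hop : ((1 - μ : ℝ) : ℂ) • p + ((1 - (1 - μ) : ℝ) : ℂ) • q
        = (μ : ℂ) • q + ((1 - μ : ℝ) : ℂ) • p := by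
      have hcast : ((1 - (1 - μ) : ℝ) : ℂ) = (μ : ℂ) := by push_cast; ring
      rw [hcast, add_comm]
    rw [hop]
    exact hspec
end

section
/- Let (H, M_A, M_B) be a finite-dimensional bipartite system: for some N ∈ ℕ and dimensions n₁,…,n_N, m₁,…,m_N, H = ⊕_{k=1}^N ℂ^{n_k} ⊗ ℂ^{m_k}, M_A = ⊕_k M_{n_k}(ℂ) ⊗ 1, M_B = ⊕_k 1 ⊗ M_{m_k}(ℂ). Fix d ≥ 1 and a standard basis vector e₀ ∈ ℂ^d. Let Ω ∈ H and Ψ ∈ ℂ^d ⊗ ℂ^d be unit vectors; let ω_A be the state on M_A given by ω_A(x) = ⟨Ω, x Ω⟩, and let ψ_{A'} be the state on M_d(ℂ) given by ψ_{A'}(y) = ⟨Ψ, (y ⊗ 1) Ψ⟩. Suppose there is a unitary u in the C*-algebra M_A ⊗ M_d(ℂ) with ‖(ω_A ⊗ ψ_{A'}) - (ω_A ⊗ φ₀)(u* · u)‖ ≤ ε, where φ₀(y) = ⟨e₀, y e₀⟩, (ω_A ⊗ φ₀)(u* · u) denotes the functional x ↦ (ω_A ⊗ φ₀)(u* x u),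 and the norm is the norm of linear functionals on M_A ⊗ M_d(ℂ). Then there exists a unitary v in M_B ⊗ M_d(ℂ) such that ‖ (Ω ⊗ Ψ) - u_{AA'} v_{BB'} (Ω ⊗ e₀ ⊗ e₀) ‖ ≤ √ε, where u_{AA'} denotes u acting on H ⊗ ℂ^d ⊗ ℂ^d via M_A on H and M_d(ℂ) on the first ℂ^d factor (identity on the second), and v_{BB'} denotes v acting via M_B on H and M_d(ℂ) on the second ℂ^d factor (identity on the first). -/
open scoped Matrix.Norms.L2Operator ComplexOrder InnerProductSpace

/-! A finite-dimensional bipartite system `(H, M_A, M_B)`: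
`H = ⊕_{k=1}^N ℂ^{n_k} ⊗ ℂ^{m_k}`, `M_A = ⊕_k M_{n_k}(ℂ) ⊗ 1`,
`M_B = ⊕_k 1 ⊗ M_{m_k}(ℂ)`.  Elements of `M_A ⊗ M_d(ℂ)` are represented as families
`u : Π k, M_{n_k · d}(ℂ)` (with index set `Fin (n k) × Fin d`), acting on
`H ⊗ ℂ^d ⊗ ℂ^d`, and similarly for `M_B ⊗ M_d(ℂ)`. -/

/-- The Hilbert space `H = ⊕_k ℂ^{n_k} ⊗ ℂ^{m_k}`. -/
abbrev BipH (N : ℕ) (n m : Fin N → ℕ) : Type :=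
  PiLp 2 fun k : Fin N => EuclideanSpace ℂ (Fin (n k) × Fin (m k))

/-- The amplified Hilbert space `H ⊗ ℂ^d ⊗ ℂ^d`. -/
abbrev AmpH (N : ℕ) (n m : Fin N → ℕ) (d : ℕ) : Type :=
  PiLp 2 fun k : Fin N => EuclideanSpace ℂ ((Fin (n k) × Fin (m k)) × (Fin d × Fin d))

/-- The tensor product vector `Ω ⊗ Ψ ∈ H ⊗ (ℂ^d ⊗ ℂ^d)`. -/
noncomputable def ampVec {N : ℕ} {n m : Fin N → ℕ} {d : ℕ} (Ω : BipH N n m)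
    (Ψ : EuclideanSpace ℂ (Fin d × Fin d)) : AmpH N n m d :=
  WithLp.toLp 2 fun k => WithLp.toLp 2 fun p => Ω k p.1 * Ψ p.2

/-- The action of `x ∈ M_A ⊗ M_d(ℂ)` on `H ⊗ ℂ^d ⊗ ℂ^d`:
it acts via its matrix entries on the `ℂ^{n_k}` factors and the *first* `ℂ^d` factor,
and as the identity on the `ℂ^{m_k}` factors and the second `ℂ^d` factor. -/
noncomputable def actAd {N : ℕ} {n m : Fin N → ℕ} {d : ℕ}
    (x : Π k : Fin N, Matrix (Fin (n k) × Fin d) (Fin (n k) × Fin d) ℂ)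
    (v : AmpH N n m d) : AmpH N n m d :=
  WithLp.toLp 2 fun k => WithLp.toLp 2 fun p => ∑ a' : Fin (n k), ∑ s' : Fin d,
    x k (p.1.1, p.2.1) (a', s') * v k ((a', p.1.2), (s', p.2.2))

/-- The action of `w ∈ M_B ⊗ M_d(ℂ)` on `H ⊗ ℂ^d ⊗ ℂ^d`:
it acts via its matrix entries on the `ℂ^{m_k}` factors and the *second* `ℂ^d` factor,
and as the identity on the `ℂ^{n_k}` factors and the first `ℂ^d` factor. -/
noncomputable def actBd {N : ℕ} {n m : Fin N → ℕ} {d : ℕ}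
    (w : Π k : Fin N, Matrix (Fin (m k) × Fin d) (Fin (m k) × Fin d) ℂ)
    (v : AmpH N n m d) : AmpH N n m d :=
  WithLp.toLp 2 fun k => WithLp.toLp 2 fun p => ∑ b' : Fin (m k), ∑ t' : Fin d,
    w k (p.1.2, p.2.2) (b', t') * v k ((p.1.1, b'), (p.2.1, t'))

namespace BipAux

open Matrix





variable {ι : Type*} [Fintype ι] [DecidableEq ι]

lemma inner_equiv_symm_aux {κ : Type*} [Fintype κ] (x y : κ → ℂ) :
    ⟪(WithLp.equiv 2 (κ → ℂ)).symm x, (WithLp.equiv 2 (κ → ℂ)).symm y⟫_ℂ = star x ⬝ᵥ y := by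
  simp only [WithLp.equiv_symm_apply, EuclideanSpace.inner_toLp_toLp]
  exact dotProduct_comm _ _

/-- Function calculus gadget for a Hermitian matrix. -/
noncomputable def hfn {A : Matrix ι ι ℂ} (hA : A.IsHermitian) (f : ℝ → ℝ) : Matrix ι ι ℂ :=
  (hA.eigenvectorUnitary : Matrix ι ι ℂ) *
    diagonal (fun i => (f (hA.eigenvalues i) : ℂ)) *
    star (hA.eigenvectorUnitary : Matrix ι ι ℂ)

variable {A : Matrix ι ι ℂ} (hA : A.IsHermitian)

lemma conj_sandwich_mul (D E : Matrix ι ι ℂ) :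
    ((hA.eigenvectorUnitary : Matrix ι ι ℂ) * D * star (hA.eigenvectorUnitary : Matrix ι ι ℂ)) *
      ((hA.eigenvectorUnitary : Matrix ι ι ℂ) * E * star (hA.eigenvectorUnitary : Matrix ι ι ℂ))
    = (hA.eigenvectorUnitary : Matrix ι ι ℂ) * (D * E) *
        star (hA.eigenvectorUnitary : Matrix ι ι ℂ) := by
  have h1 : star (hA.eigenvectorUnitary : Matrix ι ι ℂ) *
      (hA.eigenvectorUnitary : Matrix ι ι ℂ) = 1 :=
    Unitary.coe_star_mul_self hA.eigenvectorUnitary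
  calc ((hA.eigenvectorUnitary : Matrix ι ι ℂ) * D * star (hA.eigenvectorUnitary : Matrix ι ι ℂ)) *
      ((hA.eigenvectorUnitary : Matrix ι ι ℂ) * E * star (hA.eigenvectorUnitary : Matrix ι ι ℂ))
      = (hA.eigenvectorUnitary : Matrix ι ι ℂ) *
        (D * ((star (hA.eigenvectorUnitary : Matrix ι ι ℂ) *
          (hA.eigenvectorUnitary : Matrix ι ι ℂ)) * (E *
            star (hA.eigenvectorUnitary : Matrix ι ι ℂ)))) := by noncomm_ring
    _ = _ := by rw [h1, one_mul, ← Matrix.mul_assoc, ← Matrix.mul_assoc, Matrix.mul_assoc _ D E]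

lemma hfn_mul (f g : ℝ → ℝ) :
    hfn hA f * hfn hA g = hfn hA (fun t => f t * g t) := by
  unfold hfn
  rw [conj_sandwich_mul, diagonal_mul_diagonal]
  congr 2
  ext i
  push_cast
  ring

lemma hfn_congr {f g : ℝ → ℝ} (h : ∀ i, f (hA.eigenvalues i) = g (hA.eigenvalues i)) :
    hfn hA f = hfn hA g := by
  unfold hfn
  congr 2
  exact congrArg diagonal (funext fun i => by rw [h i])

lemma hfn_id : hfn hA (fun t => t) = A := by
  conv_rhs => rw [hA.spectral_theorem]
  rfl

lemma hfn_one : hfn hA (fun _ => 1) = 1 := by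
  unfold hfn
  have h1 : (hA.eigenvectorUnitary : Matrix ι ι ℂ) *
      star (hA.eigenvectorUnitary : Matrix ι ι ℂ) = 1 :=
    Unitary.coe_mul_star_self hA.eigenvectorUnitary
  simp [h1]

lemma hfn_isHermitian (f : ℝ → ℝ) : (hfn hA f).IsHermitian := by
  unfold hfn
  unfold Matrix.IsHermitian
  simp only [star_eq_conjTranspose, conjTranspose_mul, conjTranspose_conjTranspose,
    diagonal_conjTranspose, Matrix.mul_assoc]
  congr 1
  congr 1
  · ext i
    simp [Pi.star_def, Complex.conj_ofReal]

lemma trace_hfn (f : ℝ → ℝ) : trace (hfn hA f) = ∑ i, (f (hA.eigenvalues i) : ℂ) := by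
  unfold hfn
  rw [trace_mul_cycle, Unitary.coe_star_mul_self hA.eigenvectorUnitary, one_mul, trace_diagonal]

lemma hfn_posSemidef {f : ℝ → ℝ} (h : ∀ i, 0 ≤ f (hA.eigenvalues i)) :
    (hfn hA f).PosSemidef := by
  have hd : PosSemidef (diagonal (fun i => (f (hA.eigenvalues i) : ℂ))) :=
    posSemidef_diagonal_iff.mpr fun i => by
      rw [Complex.zero_le_real]; exact h i
  simpa [hfn, star_eq_conjTranspose, Matrix.mul_assoc] using
    hd.mul_mul_conjTranspose_same (hA.eigenvectorUnitary : Matrix ι ι ℂ)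

lemma hfn_add (f g : ℝ → ℝ) :
    hfn hA f + hfn hA g = hfn hA (fun t => f t + g t) := by
  unfold hfn
  rw [← Matrix.add_mul, ← Matrix.mul_add, diagonal_add]
  congr 2
  ext i
  push_cast
  ring

lemma hfn_sub (f g : ℝ → ℝ) :
    hfn hA f - hfn hA g = hfn hA (fun t => f t - g t) := by
  unfold hfn
  rw [← Matrix.sub_mul, ← Matrix.mul_sub, diagonal_sub]
  congr 2
  ext i
  push_cast
  ring

lemma hfn_mul_self (f : ℝ → ℝ) : hfn hA f * A = hfn hA (fun t => f t * t) := by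
  have h := hfn_mul hA f (fun t => t)
  rwa [hfn_id] at h

lemma self_mul_hfn (f : ℝ → ℝ) : A * hfn hA f = hfn hA (fun t => t * f t) := by
  have h := hfn_mul hA (fun t => t) f
  rwa [hfn_id] at h

lemma hfn_sub_self (f : ℝ → ℝ) : hfn hA f - A = hfn hA (fun t => f t - t) := by
  have h := hfn_sub hA f (fun t => t)
  rwa [hfn_id] at h

lemma hfn_add_self (f : ℝ → ℝ) : hfn hA f + A = hfn hA (fun t => f t + t) := by
  have h := hfn_add hA f (fun t => t)
  rwa [hfn_id] at h


variable {ι : Type*} [Fintype ι] [DecidableEq ι]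

lemma psd_entry_re_nonneg {P : Matrix ι ι ℂ} (hP : P.PosSemidef) (i : ι) :
    0 ≤ (P i i).re := by
  have h := hP.dotProduct_mulVec_nonneg (Pi.single i 1)
  have hstar : (star (Pi.single i 1) : ι → ℂ) = Pi.single i 1 := by
    funext j
    simp only [Pi.star_apply, Pi.single_apply]
    split_ifs <;> simp
  have : (star (Pi.single i 1) : ι → ℂ) ⬝ᵥ (P *ᵥ Pi.single i 1) = P i i := by
    rw [hstar, Matrix.mulVec_single, single_dotProduct]
    simp
  rw [this] at h
  exact (Complex.le_def.mp h).1

lemma re_trace_psd_nonneg {P : Matrix ι ι ℂ} (hP : P.PosSemidef) :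
    0 ≤ (trace P).re := by
  rw [Matrix.trace, Complex.re_sum]
  exact Finset.sum_nonneg fun i _ => psd_entry_re_nonneg hP i

/-- square root of psd matrix, via `hfn`. -/
noncomputable def msqrt {P : Matrix ι ι ℂ} (hP : P.PosSemidef) : Matrix ι ι ℂ :=
  hfn hP.1 Real.sqrt

lemma msqrt_posSemidef {P : Matrix ι ι ℂ} (hP : P.PosSemidef) : (msqrt hP).PosSemidef :=
  hfn_posSemidef hP.1 fun i => Real.sqrt_nonneg _

lemma msqrt_isHermitian {P : Matrix ι ι ℂ} (hP : P.PosSemidef) : (msqrt hP).IsHermitian :=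
  hfn_isHermitian hP.1 _

lemma msqrt_mul_self {P : Matrix ι ι ℂ} (hP : P.PosSemidef) : msqrt hP * msqrt hP = P := by
  unfold msqrt
  rw [hfn_mul, hfn_congr hP.1 (g := fun t => t)
    (fun i => Real.mul_self_sqrt (hP.eigenvalues_nonneg i)), hfn_id]

lemma re_trace_psd_mul_nonneg {M N : Matrix ι ι ℂ} (hM : M.PosSemidef) (hN : N.PosSemidef) :
    0 ≤ (trace (M * N)).re := by
  have h1 : trace (M * N) = trace (msqrt hM * N * msqrt hM) := by
    conv_lhs => rw [← msqrt_mul_self hM]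
    rw [Matrix.mul_assoc, trace_mul_comm, Matrix.mul_assoc]
  rw [h1]
  have h2 : (msqrt hM * N * msqrt hM).PosSemidef := by
    have := hN.mul_mul_conjTranspose_same (msqrt hM)
    rwa [(msqrt_isHermitian hM).eq] at this
  exact re_trace_psd_nonneg h2

lemma norm_one_le_one : ‖(1 : Matrix ι ι ℂ)‖ ≤ 1 := by
  rcases isEmpty_or_nonempty ι with h | h
  · have : (1 : Matrix ι ι ℂ) = 0 := Subsingleton.elim _ _
    rw [this, norm_zero]; norm_num
  · have : Nontrivial (Matrix ι ι ℂ) := by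
      refine ⟨0, 1, fun hc => ?_⟩
      have := congrFun (congrFun hc (Classical.arbitrary ι)) (Classical.arbitrary ι)
      simp at this
    rw [CStarRing.norm_one]

lemma powers_stormer {A B : Matrix ι ι ℂ} (hA : A.PosSemidef) (hB : B.PosSemidef) :
    ∃ S : Matrix ι ι ℂ, ‖S‖ ≤ 1 ∧
      (trace ((A - B) * (A - B))).re ≤ (trace (S * (A * A - B * B))).re := by
  have hD : (A - B).IsHermitian := hA.1.sub hB.1
  refine ⟨hfn hD (fun t => if 0 ≤ t then (1:ℝ) else -1), ?_, ?_⟩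
  · have hSS : hfn hD (fun t => if 0 ≤ t then (1:ℝ) else -1) *
        hfn hD (fun t => if 0 ≤ t then (1:ℝ) else -1) = 1 := by
      rw [hfn_mul, hfn_congr hD (g := fun _ => 1) (fun i => by by_cases h : 0 ≤ hD.eigenvalues i <;> simp [h]),
        hfn_one]
    have hherm := hfn_isHermitian hD (fun t => if 0 ≤ t then (1:ℝ) else -1)
    have h1 : ‖hfn hD (fun t => if 0 ≤ t then (1:ℝ) else -1)‖ *
        ‖hfn hD (fun t => if 0 ≤ t then (1:ℝ) else -1)‖ ≤ 1 := by
      rw [← CStarRing.norm_star_mul_self]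
      rw [star_eq_conjTranspose, hherm.eq, hSS]
      exact norm_one_le_one
    nlinarith [norm_nonneg (hfn hD (fun t => if 0 ≤ t then (1:ℝ) else -1))]
  · have hSD : hfn hD (fun t => if 0 ≤ t then (1:ℝ) else -1) * (A - B) = hfn hD (fun t => |t|) := by
      rw [hfn_mul_self]
      exact hfn_congr hD fun i => by
        by_cases h : 0 ≤ hD.eigenvalues i
        · simp [h, abs_of_nonneg h]
        · simp [h, abs_of_neg (lt_of_not_ge h)]
    have hDS : (A - B) * hfn hD (fun t => if 0 ≤ t then (1:ℝ) else -1) = hfn hD (fun t => |t|) := by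
      rw [self_mul_hfn]
      exact hfn_congr hD fun i => by
        by_cases h : 0 ≤ hD.eigenvalues i
        · simp [h, abs_of_nonneg h]
        · simp [h, abs_of_neg (lt_of_not_ge h), mul_comm]
    -- 2 * tr(S(A²-B²)) = tr(S(A-B)(A+B)) + tr(S(A+B)(A-B))
    have e1 : trace (hfn hD (fun t => if 0 ≤ t then (1:ℝ) else -1) * (A*A - B*B)) +
        trace (hfn hD (fun t => if 0 ≤ t then (1:ℝ) else -1) * (A*A - B*B)) =
        trace (hfn hD (fun t => if 0 ≤ t then (1:ℝ) else -1) * (A - B) * (A + B)) +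
        trace (hfn hD (fun t => if 0 ≤ t then (1:ℝ) else -1) * (A + B) * (A - B)) := by
      rw [← trace_add, ← trace_add]
      refine congrArg trace ?_
      noncomm_ring
    have e2 : trace (hfn hD (fun t => if 0 ≤ t then (1:ℝ) else -1) * (A + B) * (A - B)) =
        trace ((A - B) * hfn hD (fun t => if 0 ≤ t then (1:ℝ) else -1) * (A + B)) := by
      rw [trace_mul_cycle]
    have e3 : trace (hfn hD (fun t => if 0 ≤ t then (1:ℝ) else -1) * (A*A - B*B)) =
        trace (hfn hD (fun t => |t|) * (A + B)) := by
      have := e1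
      rw [e2, hSD, hDS] at this
      have h2 : (2:ℂ) ≠ 0 := two_ne_zero
      have := this
      linear_combination this / 2
    -- tr((A-B)(A-B)) ≤ tr(|D|(A+B)) in re
    have e4 : (trace ((A-B)*(A-B))).re ≤ (trace (hfn hD (fun t => |t|) * (A + B))).re := by
      have hplus : (hfn hD (fun t => |t|) - (A - B)).PosSemidef := by
        rw [hfn_sub_self]
        exact hfn_posSemidef hD fun i => by simp [sub_nonneg, le_abs_self]
      have hminus : (hfn hD (fun t => |t|) + (A - B)).PosSemidef := by
        rw [hfn_add_self]
        exact hfn_posSemidef hD fun i => by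
          have := neg_abs_le (hD.eigenvalues i); linarith
      have t1 := re_trace_psd_mul_nonneg hplus hA
      have t2 := re_trace_psd_mul_nonneg hminus hB
      have expand : trace (hfn hD (fun t => |t|) * (A + B)) - trace ((A-B)*(A-B)) =
          trace ((hfn hD (fun t => |t|) - (A - B)) * A) +
          trace ((hfn hD (fun t => |t|) + (A - B)) * B) := by
        rw [← trace_add, ← trace_sub]
        congr 1
        noncomm_ring
      have := congrArg Complex.re expand
      simp only [Complex.sub_re, Complex.add_re] at this
      linarith
    rw [e3]
    exact e4

variable {J : Type*} [Fintype J] [DecidableEq J]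

lemma eq_zero_of_trace_conjTranspose_mul_self {I' : Type*} [Fintype I']
    {M : Matrix I' J ℂ} (h : trace (Mᴴ * M) = 0) : M = 0 := by
  have h1 : ∀ j ∈ Finset.univ, ∀ i ∈ Finset.univ, (0:ℝ) ≤ Complex.normSq (M i j) := by
    intro j _ i _; exact Complex.normSq_nonneg _
  have h2 : ∑ j, ∑ i, Complex.normSq (M i j) = 0 := by
    have : (trace (Mᴴ * M)).re = ∑ j, ∑ i, Complex.normSq (M i j) := by
      simp only [Matrix.trace, Matrix.diag_apply, Matrix.mul_apply, conjTranspose_apply]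
      rw [Complex.re_sum]
      refine Finset.sum_congr rfl fun j _ => ?_
      rw [Complex.re_sum]
      refine Finset.sum_congr rfl fun i _ => ?_
      rw [Complex.star_def, ← Complex.normSq_eq_conj_mul_self]
      simp
    rw [← this, h, Complex.zero_re]
  ext i j
  have := (Finset.sum_eq_zero_iff_of_nonneg (fun j _ => Finset.sum_nonneg (fun i _ => Complex.normSq_nonneg (M i j)))).mp h2 j (Finset.mem_univ j)
  have := (Finset.sum_eq_zero_iff_of_nonneg (fun i _ => Complex.normSq_nonneg (M i j))).mp this i (Finset.mem_univ i)
  simpa using Complex.normSq_eq_zero.mp this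

/-- Unitary polar decomposition of a square complex matrix. -/
lemma exists_unitary_polar (M : Matrix J J ℂ) :
    ∃ W ∈ Matrix.unitaryGroup J ℂ, ∃ T : Matrix J J ℂ, T.PosSemidef ∧ M = W * T := by
  have hh : (Mᴴ * M).PosSemidef := posSemidef_conjTranspose_mul_self M
  have hH : (Mᴴ * M).IsHermitian := hh.1
  set b := hH.eigenvectorBasis with hb
  set dd := hH.eigenvalues with hdd
  -- candidate orthonormal family on the support
  set v : J → EuclideanSpace ℂ J :=
    fun i => ((Real.sqrt (dd i) : ℂ)⁻¹ • (WithLp.equiv 2 _).symm (M *ᵥ ⇑(b i))) with hv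
  have inner_Mb : ∀ i j : J, ⟪(WithLp.equiv 2 (J → ℂ)).symm (M *ᵥ ⇑(b i)),
      (WithLp.equiv 2 (J → ℂ)).symm (M *ᵥ ⇑(b j))⟫_ℂ = (dd j : ℂ) * (if i = j then 1 else 0) := by
    intro i j
    rw [inner_equiv_symm_aux, Matrix.star_mulVec, ← dotProduct_mulVec,
      Matrix.mulVec_mulVec, hH.mulVec_eigenvectorBasis]
    have horth := orthonormal_iff_ite.mp b.orthonormal i j
    rw [dotProduct_smul]
    rw [show (star ⇑(b i)) ⬝ᵥ ⇑(b j) = ⟪b i, b j⟫_ℂ from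
      (dotProduct_comm _ _).trans (EuclideanSpace.inner_eq_star_dotProduct _ _).symm, horth]
    simp [RCLike.real_smul_eq_coe_mul, hdd]
  have hv_on : Orthonormal ℂ (Set.restrict {i | dd i ≠ 0} v) := by
    rw [orthonormal_iff_ite]
    rintro ⟨i, hi⟩ ⟨j, hj⟩
    have hdi : 0 < dd i := lt_of_le_of_ne (hh.eigenvalues_nonneg i) (Ne.symm hi)
    have hdj : 0 < dd j := lt_of_le_of_ne (hh.eigenvalues_nonneg j) (Ne.symm hj)
    simp only [Set.restrict_apply, hv]
    dsimp only [Set.restrict, Set.domRestrict]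
    rw [inner_smul_left, inner_smul_right, inner_Mb]
    simp only [Subtype.mk_eq_mk]
    by_cases hij : i = j
    · subst hij
      have h2 : ((dd i : ℝ) : ℂ) = (Real.sqrt (dd i) : ℂ) * (Real.sqrt (dd i) : ℂ) := by
        rw [← Complex.ofReal_mul, Real.mul_self_sqrt hdi.le]
      have hsq : (Real.sqrt (dd i) : ℂ) ≠ 0 := by
        simp only [ne_eq, Complex.ofReal_eq_zero]
        exact (Real.sqrt_pos.mpr hdi).ne'
      rw [map_inv₀, Complex.conj_ofReal]
      simp only [if_pos rfl, mul_one]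
      rw [h2]
      field_simp
    · simp [hij]
  obtain ⟨c, hc⟩ := hv_on.exists_orthonormalBasis_extension_of_card_eq
    (by simp [finrank_euclideanSpace])
  -- the unitary built from c, and the eigenvector unitary
  set U1 : Matrix J J ℂ := Matrix.of (fun a i => c i a) with hU1
  have hU1u : U1 ∈ Matrix.unitaryGroup J ℂ := by
    rw [Matrix.mem_unitaryGroup_iff']
    ext i j
    simp only [Matrix.mul_apply, Matrix.star_apply, Matrix.one_apply, hU1, Matrix.of_apply,
      star_eq_conjTranspose]
    have := orthonormal_iff_ite.mp c.orthonormal i j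
    rw [show ⟪c i, c j⟫_ℂ = (star ⇑(c i)) ⬝ᵥ ⇑(c j) from
      (EuclideanSpace.inner_eq_star_dotProduct _ _).trans (dotProduct_comm _ _)] at this
    simpa [dotProduct, Pi.star_apply] using this
  set U2 : Matrix J J ℂ := (hH.eigenvectorUnitary : Matrix J J ℂ) with hU2
  have hstaru : star U2 ∈ Matrix.unitaryGroup J ℂ := by
    rw [Matrix.mem_unitaryGroup_iff, star_star]
    exact Unitary.coe_star_mul_self hH.eigenvectorUnitary
  refine ⟨U1 * star U2, mul_mem hU1u hstaru, hfn hH Real.sqrt,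
    hfn_posSemidef hH (fun i => Real.sqrt_nonneg _), ?_⟩
  have key : M * U2 = U1 * diagonal (fun i => (Real.sqrt (dd i) : ℂ)) := by
    ext a i
    have hcol : (M * U2) a i = (M *ᵥ ⇑(b i)) a := by
      simp only [Matrix.mul_apply, Matrix.mulVec, dotProduct, hU2, hH.eigenvectorUnitary_apply, hb]
    rw [hcol, Matrix.mul_apply]
    rw [Finset.sum_eq_single i (fun b' _ hb' => by simp [Matrix.diagonal_apply_ne _ hb'])
      (fun h => absurd (Finset.mem_univ i) h)]
    rw [Matrix.diagonal_apply_eq, hU1, Matrix.of_apply]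
    by_cases hdi : dd i = 0
    · have hMb : (WithLp.equiv 2 (J → ℂ)).symm (M *ᵥ ⇑(b i)) = 0 := by
        rw [← inner_self_eq_zero (𝕜 := ℂ)]
        rw [inner_Mb]
        simp [hdi]
      have : (M *ᵥ ⇑(b i)) = 0 := by
        have := congrArg (WithLp.equiv 2 (J → ℂ)) hMb
        simpa using this
      rw [congrFun this a, hdi]
      simp
    · rw [hc i hdi, hv]
      have hsq : (Real.sqrt (dd i) : ℂ) ≠ 0 := by
        have hdi' : 0 < dd i := lt_of_le_of_ne (hh.eigenvalues_nonneg i) (Ne.symm hdi)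
        simp [Real.sqrt_eq_zero', not_le, hdi']
      simp only [PiLp.smul_apply, WithLp.equiv_symm_apply, PiLp.toLp_apply, smul_eq_mul]
      field_simp
  have hU2u : U2 * star U2 = 1 := Unitary.coe_mul_star_self hH.eigenvectorUnitary
  have hU2u' : star U2 * U2 = 1 := Unitary.coe_star_mul_self hH.eigenvectorUnitary
  have hM : M = M * U2 * star U2 := by rw [Matrix.mul_assoc, hU2u, Matrix.mul_one]
  conv_lhs => rw [hM]
  rw [key]
  unfold hfn
  rw [← hU2, ← hdd]
  calc U1 * diagonal (fun i => (Real.sqrt (dd i) : ℂ)) * star U2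
      = U1 * ((star U2 * U2) * diagonal (fun i => (Real.sqrt (dd i) : ℂ))) * star U2 := by
        rw [hU2u', Matrix.one_mul]
    _ = U1 * star U2 * (U2 * diagonal (fun i => (Real.sqrt (dd i) : ℂ)) * star U2) := by
        noncomm_ring
variable {I : Type*} [Fintype I] [DecidableEq I]

lemma re_trace_psd_mul_contraction {T K : Matrix J J ℂ} (hT : T.PosSemidef)
    (hK : ‖K‖ ≤ 1) : (trace (T * K)).re ≤ (trace T).re := by
  have e1 : trace (T * K) = trace (msqrt hT * K * msqrt hT) := by
    conv_lhs => rw [← msqrt_mul_self hT]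
    rw [Matrix.mul_assoc, trace_mul_comm]
  have hherm : ∀ a i, msqrt hT i a = (starRingEnd ℂ) (msqrt hT a i) := by
    intro a i
    conv_lhs => rw [← (msqrt_isHermitian hT).eq]
    simp [Matrix.conjTranspose_apply, Complex.star_def]
  have e2 : ∀ i : J, ((msqrt hT * K * msqrt hT) i i).re ≤ (T i i).re := by
    intro i
    set ci : EuclideanSpace ℂ J := (WithLp.equiv 2 (J → ℂ)).symm (fun a => msqrt hT a i) with hci
    have hent : (msqrt hT * K * msqrt hT) i i =
        ⟪ci, (EuclideanSpace.equiv J ℂ).symm (K *ᵥ (fun a => msqrt hT a i))⟫_ℂ := by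
      rw [show ((EuclideanSpace.equiv J ℂ).symm (K *ᵥ (fun a => msqrt hT a i)) : EuclideanSpace ℂ J)
        = (WithLp.equiv 2 (J → ℂ)).symm (K *ᵥ (fun a => msqrt hT a i)) from rfl]
      rw [hci, inner_equiv_symm_aux]
      simp only [Matrix.mul_apply, dotProduct, Matrix.mulVec, Pi.star_apply,
        Finset.sum_mul, dotProduct]
      rw [Finset.sum_comm]
      refine Finset.sum_congr rfl fun a _ => ?_
      rw [Finset.mul_sum]
      refine Finset.sum_congr rfl fun b _ => ?_
      rw [hherm a i]
      simp only [Complex.star_def]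
      try ring
    have hbound : ‖⟪ci, (EuclideanSpace.equiv J ℂ).symm (K *ᵥ (fun a => msqrt hT a i))⟫_ℂ‖
        ≤ ‖ci‖ * ‖ci‖ := by
      calc ‖⟪ci, (EuclideanSpace.equiv J ℂ).symm (K *ᵥ (fun a => msqrt hT a i))⟫_ℂ‖
          ≤ ‖ci‖ * ‖(EuclideanSpace.equiv J ℂ).symm (K *ᵥ (fun a => msqrt hT a i))‖ :=
            norm_inner_le_norm _ _
        _ ≤ ‖ci‖ * (‖K‖ * ‖ci‖) := by
            refine mul_le_mul_of_nonneg_left ?_ (norm_nonneg _)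
            exact Matrix.l2_opNorm_mulVec K ci
        _ ≤ ‖ci‖ * ‖ci‖ := by
            have := norm_nonneg ci
            nlinarith
    have hnorm : ‖ci‖ * ‖ci‖ = (T i i).re := by
      have h3 : (⟪ci, ci⟫_ℂ) = T i i := by
        rw [hci, inner_equiv_symm_aux]
        conv_rhs => rw [← msqrt_mul_self hT]
        simp only [Matrix.mul_apply, dotProduct, Pi.star_apply]
        refine Finset.sum_congr rfl fun a _ => ?_
        rw [hherm i a]
        simp only [Complex.star_def, Complex.conj_conj]
        try exact mul_comm _ _
      have h4 : ‖ci‖ ^ 2 = RCLike.re (⟪ci, ci⟫_ℂ) := norm_sq_eq_re_inner (𝕜 := ℂ) ci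
      rw [h3] at h4
      rw [← sq]
      exact h4
    rw [hent]
    calc (⟪ci, (EuclideanSpace.equiv J ℂ).symm (K *ᵥ (fun a => msqrt hT a i))⟫_ℂ).re
        ≤ ‖⟪ci, (EuclideanSpace.equiv J ℂ).symm (K *ᵥ (fun a => msqrt hT a i))⟫_ℂ‖ :=
          Complex.re_le_norm _
      _ ≤ ‖ci‖ * ‖ci‖ := hbound
      _ = (T i i).re := hnorm
  rw [e1, Matrix.trace, Matrix.trace, Complex.re_sum, Complex.re_sum]
  exact Finset.sum_le_sum fun i _ => e2 i

lemma exists_contraction_pinv (X : Matrix I J ℂ) :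
    ∃ V : Matrix I J ℂ, ‖V‖ ≤ 1 ∧
      V * Xᴴ = msqrt (posSemidef_self_mul_conjTranspose X) := by
  have hρ := posSemidef_self_mul_conjTranspose X
  refine ⟨hfn hρ.1 (fun t => if t = 0 then 0 else (Real.sqrt t)⁻¹) * X, ?_, ?_⟩
  · -- norm bound
    have hVV : (hfn hρ.1 (fun t => if t = 0 then 0 else (Real.sqrt t)⁻¹) * X) *
        (hfn hρ.1 (fun t => if t = 0 then 0 else (Real.sqrt t)⁻¹) * X)ᴴ =
        hfn hρ.1 (fun t => if t = 0 then 0 else 1) := by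
      rw [conjTranspose_mul, (hfn_isHermitian hρ.1 _).eq]
      calc (hfn hρ.1 (fun t => if t = 0 then 0 else (Real.sqrt t)⁻¹) * X) *
            (Xᴴ * hfn hρ.1 (fun t => if t = 0 then 0 else (Real.sqrt t)⁻¹))
          = hfn hρ.1 (fun t => if t = 0 then 0 else (Real.sqrt t)⁻¹) * (X * Xᴴ) *
            hfn hρ.1 (fun t => if t = 0 then 0 else (Real.sqrt t)⁻¹) := by
              simp only [Matrix.mul_assoc]
        _ = hfn hρ.1 (fun t => if t = 0 then 0 else 1) := by
            rw [hfn_mul_self hρ.1, hfn_mul]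
            refine hfn_congr hρ.1 fun i => ?_
            rcases eq_or_lt_of_le (hρ.eigenvalues_nonneg i) with h | h
            · simp [← h]
            · have hne : hρ.1.eigenvalues i ≠ 0 := h.ne'
              have hs : Real.sqrt (hρ.1.eigenvalues i) ≠ 0 := (Real.sqrt_pos.mpr h).ne'
              simp only [if_neg hne]
              have hrw : (Real.sqrt (hρ.1.eigenvalues i))⁻¹ * hρ.1.eigenvalues i *
                  (Real.sqrt (hρ.1.eigenvalues i))⁻¹ = hρ.1.eigenvalues i /
                  (Real.sqrt (hρ.1.eigenvalues i) * Real.sqrt (hρ.1.eigenvalues i)) := by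
                ring
              rw [hrw, Real.mul_self_sqrt h.le, div_self hne]
    have hPP : hfn hρ.1 (fun t => if t = 0 then 0 else 1) *
        hfn hρ.1 (fun t => if t = 0 then 0 else 1) =
        hfn hρ.1 (fun t => if t = 0 then 0 else 1) := by
      rw [hfn_mul]
      exact hfn_congr hρ.1 fun i => by by_cases h : hρ.1.eigenvalues i = 0 <;> simp [h]
    have hPnorm : ‖hfn hρ.1 (fun t => if t = 0 then 0 else 1)‖ ≤ 1 := by
      have h1 : ‖hfn hρ.1 (fun t => if t = 0 then 0 else 1)‖ *
          ‖hfn hρ.1 (fun t => if t = 0 then 0 else 1)‖ =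
          ‖hfn hρ.1 (fun t => if t = 0 then 0 else 1)‖ := by
        rw [← CStarRing.norm_star_mul_self, star_eq_conjTranspose,
          (hfn_isHermitian hρ.1 _).eq, hPP]
      nlinarith [norm_nonneg (hfn hρ.1 (fun t => if t = 0 then 0 else 1))]
    have h2 := Matrix.l2_opNorm_conjTranspose_mul_self
      (hfn hρ.1 (fun t => if t = 0 then 0 else (Real.sqrt t)⁻¹) * X)ᴴ
    rw [conjTranspose_conjTranspose, hVV] at h2
    have h3 := Matrix.l2_opNorm_conjTranspose
      (hfn hρ.1 (fun t => if t = 0 then 0 else (Real.sqrt t)⁻¹) * X)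
    nlinarith [norm_nonneg (hfn hρ.1 (fun t => if t = 0 then 0 else (Real.sqrt t)⁻¹) * X),
      norm_nonneg (hfn hρ.1 (fun t => if t = 0 then 0 else (Real.sqrt t)⁻¹) * X)ᴴ]
  · rw [Matrix.mul_assoc, hfn_mul_self hρ.1]
    refine hfn_congr hρ.1 fun i => ?_
    rcases eq_or_lt_of_le (hρ.eigenvalues_nonneg i) with h | h
    · simp [← h]
    · have hne : hρ.1.eigenvalues i ≠ 0 := h.ne'
      have hs : Real.sqrt (hρ.1.eigenvalues i) ≠ 0 := (Real.sqrt_pos.mpr h).ne'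
      simp only [if_neg hne]
      rw [inv_mul_eq_iff_eq_mul₀ hs]
      exact (Real.mul_self_sqrt h.le).symm

lemma overlap (X Y : Matrix I J ℂ) :
    ∃ W ∈ Matrix.unitaryGroup J ℂ,
      (trace (msqrt (posSemidef_self_mul_conjTranspose X) *
          msqrt (posSemidef_self_mul_conjTranspose Y))).re ≤ (trace (Xᴴ * Y * W)).re := by
  obtain ⟨V, hV1, hV2⟩ := exists_contraction_pinv X
  obtain ⟨V', hV'1, hV'2⟩ := exists_contraction_pinv Y
  obtain ⟨W₀, hW₀, T, hT, hMT⟩ := exists_unitary_polar (Xᴴ * Y)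
  have hW₀1 : star W₀ * W₀ = 1 := mem_unitaryGroup_iff'.mp hW₀
  have hW₀norm : ‖W₀‖ ≤ 1 := by
    have h1 : ‖W₀‖ * ‖W₀‖ = ‖(1 : Matrix J J ℂ)‖ := by
      rw [← hW₀1, CStarRing.norm_star_mul_self]
    have := norm_one_le_one (ι := J)
    nlinarith [norm_nonneg W₀]
  refine ⟨star W₀, ?_, ?_⟩
  · rw [mem_unitaryGroup_iff, star_star, hW₀1]
  · have hAB : msqrt (posSemidef_self_mul_conjTranspose X) *
        msqrt (posSemidef_self_mul_conjTranspose Y) = V * (Xᴴ * Y) * V'ᴴ := by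
      have hY : Y * V'ᴴ = msqrt (posSemidef_self_mul_conjTranspose Y) := by
        rw [← (msqrt_isHermitian (posSemidef_self_mul_conjTranspose Y)).eq, ← hV'2]
        rw [conjTranspose_mul, conjTranspose_conjTranspose]
      rw [← hV2, ← hY]
      simp only [Matrix.mul_assoc]
    have e1 : trace (msqrt (posSemidef_self_mul_conjTranspose X) *
        msqrt (posSemidef_self_mul_conjTranspose Y)) =
        trace (T * (V'ᴴ * (V * W₀))) := by
      rw [hAB, hMT]
      have hm : V * (W₀ * T) * V'ᴴ = (V * W₀) * (T * V'ᴴ) := by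
        simp only [Matrix.mul_assoc]
      rw [hm, trace_mul_comm]
      simp only [Matrix.mul_assoc]
    have e2 : trace (Xᴴ * Y * star W₀) = trace T := by
      rw [hMT]
      have hm2 : W₀ * T * star W₀ = W₀ * (T * star W₀) := by simp only [Matrix.mul_assoc]
      rw [hm2, trace_mul_comm, Matrix.mul_assoc, hW₀1, Matrix.mul_one]
    have hC : ‖V'ᴴ * (V * W₀)‖ ≤ 1 := by
      have hVt : ‖V'ᴴ‖ ≤ 1 := by rw [Matrix.l2_opNorm_conjTranspose]; exact hV'1
      calc ‖V'ᴴ * (V * W₀)‖ ≤ ‖V'ᴴ‖ * ‖V * W₀‖ := Matrix.l2_opNorm_mul _ _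
        _ ≤ ‖V'ᴴ‖ * (‖V‖ * ‖W₀‖) := by
            refine mul_le_mul_of_nonneg_left (Matrix.l2_opNorm_mul _ _) (norm_nonneg _)
        _ ≤ 1 := by
            have h1 : ‖V‖ * ‖W₀‖ ≤ 1 := by nlinarith [norm_nonneg V, norm_nonneg W₀]
            nlinarith [norm_nonneg (V'ᴴ), mul_nonneg (norm_nonneg V) (norm_nonneg W₀)]
    rw [e1, e2]
    exact re_trace_psd_mul_contraction hT hC

lemma block_estimate (X Y : Matrix I J ℂ) :
    ∃ W ∈ Matrix.unitaryGroup J ℂ, ∃ S : Matrix I I ℂ, ‖S‖ ≤ 1 ∧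
      (trace ((X - Y * W)ᴴ * (X - Y * W))).re ≤
        (trace (S * (X * Xᴴ - Y * Yᴴ))).re := by
  obtain ⟨W, hW, hover⟩ := overlap X Y
  obtain ⟨S, hS, hPS⟩ := powers_stormer
    (msqrt_posSemidef (posSemidef_self_mul_conjTranspose X))
    (msqrt_posSemidef (posSemidef_self_mul_conjTranspose Y))
  rw [msqrt_mul_self, msqrt_mul_self] at hPS
  refine ⟨W, hW, S, hS, ?_⟩
  have hWW : W * star W = 1 := mem_unitaryGroup_iff.mp hW
  -- expansion of the left-hand side
  have hYW : (Y * W) * (Y * W)ᴴ = Y * Yᴴ := by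
    rw [conjTranspose_mul]
    calc Y * W * (Wᴴ * Yᴴ) = Y * ((W * Wᴴ) * Yᴴ) := by simp only [Matrix.mul_assoc]
      _ = Y * Yᴴ := by rw [← star_eq_conjTranspose, hWW, Matrix.one_mul]
  have e1 : trace ((X - Y * W)ᴴ * (X - Y * W)) =
      trace (X * Xᴴ) + trace (Y * Yᴴ) - trace (Xᴴ * (Y * W)) - trace ((Y * W)ᴴ * X) := by
    rw [conjTranspose_sub, Matrix.sub_mul, Matrix.mul_sub, Matrix.mul_sub,
      trace_sub, trace_sub, trace_sub]
    rw [trace_mul_comm Xᴴ X, trace_mul_comm ((Y*W)ᴴ) (Y*W), hYW]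
    ring
  have e2 : trace ((Y * W)ᴴ * X) = star (trace (Xᴴ * (Y * W))) := by
    rw [← trace_conjTranspose]
    congr 1
    simp only [conjTranspose_mul, conjTranspose_conjTranspose, Matrix.mul_assoc]
  have e3 : trace ((msqrt (posSemidef_self_mul_conjTranspose X) -
      msqrt (posSemidef_self_mul_conjTranspose Y)) *
      (msqrt (posSemidef_self_mul_conjTranspose X) -
      msqrt (posSemidef_self_mul_conjTranspose Y))) =
      trace (X * Xᴴ) + trace (Y * Yᴴ) -
        trace (msqrt (posSemidef_self_mul_conjTranspose X) *
          msqrt (posSemidef_self_mul_conjTranspose Y)) -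
        trace (msqrt (posSemidef_self_mul_conjTranspose X) *
          msqrt (posSemidef_self_mul_conjTranspose Y)) := by
    rw [Matrix.sub_mul, Matrix.mul_sub, Matrix.mul_sub, trace_sub, trace_sub, trace_sub,
      msqrt_mul_self, msqrt_mul_self,
      trace_mul_comm (msqrt (posSemidef_self_mul_conjTranspose Y))
        (msqrt (posSemidef_self_mul_conjTranspose X))]
    ring
  have r1 := congrArg Complex.re e1
  have r2 := congrArg Complex.re e2
  have r3 := congrArg Complex.re e3
  simp only [Complex.sub_re, Complex.add_re, Complex.conj_re, RCLike.star_def] at r1 r2 r3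
  have hmulassoc : trace (Xᴴ * (Y * W)) = trace (Xᴴ * Y * W) := by rw [Matrix.mul_assoc]
  rw [hmulassoc] at r1 r2
  linarith [hPS, hover, r1, r2, r3]
lemma sum_quad {α β γ δ M : Type*} [Fintype α] [Fintype β] [Fintype γ] [Fintype δ]
    [AddCommMonoid M] (f : (α × β) × (γ × δ) → M) :
    ∑ p, f p = ∑ p : α × γ, ∑ q : β × δ, f ((p.1, q.1), (p.2, q.2)) := by
  calc ∑ p, f p = ∑ pq : (α × γ) × (β × δ), f ((pq.1.1, pq.2.1), (pq.1.2, pq.2.2)) :=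
        Fintype.sum_equiv (Equiv.prodProdProdComm α β γ δ) f
          (fun pq => f ((pq.1.1, pq.2.1), (pq.1.2, pq.2.2))) (fun ⟨⟨a, b⟩, ⟨c, e⟩⟩ => rfl)
    _ = ∑ p : α × γ, ∑ q : β × δ, f ((p.1, q.1), (p.2, q.2)) := by rw [Fintype.sum_prod_type]

lemma trace_entries {P Q : Type*} [Fintype P] [Fintype Q] (A B : Matrix P Q ℂ) :
    trace (Aᴴ * B) = ∑ p, ∑ q, (starRingEnd ℂ) (A p q) * B p q := by
  simp only [Matrix.trace, Matrix.diag_apply, Matrix.mul_apply, Matrix.conjTranspose_apply,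
    Complex.star_def]
  exact Finset.sum_comm

/-- reshaping a vector of `H ⊗ ℂ^d ⊗ ℂ^d` (one block) into a matrix. -/
def matOf {α β γ δ : Type*} (h : EuclideanSpace ℂ ((α × β) × (γ × δ))) :
    Matrix (α × γ) (β × δ) ℂ :=
  Matrix.of fun p q => h ((p.1, q.1), (p.2, q.2))

lemma inner_eq_sum_trace {N : ℕ} {n m : Fin N → ℕ} {d : ℕ} (v w : AmpH N n m d) :
    ⟪v, w⟫_ℂ = ∑ k, trace ((matOf (v k))ᴴ * matOf (w k)) := by
  simp only [PiLp.inner_apply, RCLike.inner_apply]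
  refine Finset.sum_congr rfl fun k _ => ?_
  rw [trace_entries, sum_quad (f := fun p => w k p * (starRingEnd ℂ) (v k p))]
  exact Finset.sum_congr rfl fun p _ => Finset.sum_congr rfl fun q _ => mul_comm _ _

lemma matOf_actAd {N : ℕ} {n m : Fin N → ℕ} {d : ℕ}
    (x : Π k : Fin N, Matrix (Fin (n k) × Fin d) (Fin (n k) × Fin d) ℂ)
    (v : AmpH N n m d) (k : Fin N) :
    matOf ((actAd x v) k) = x k * matOf (v k) := by
  ext p q
  simp only [matOf, Matrix.of_apply, actAd, Matrix.mul_apply, Fintype.sum_prod_type]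

lemma matOf_actBd {N : ℕ} {n m : Fin N → ℕ} {d : ℕ}
    (w : Π k : Fin N, Matrix (Fin (m k) × Fin d) (Fin (m k) × Fin d) ℂ)
    (v : AmpH N n m d) (k : Fin N) :
    matOf ((actBd w v) k) = matOf (v k) * (w k)ᵀ := by
  ext p q
  simp only [matOf, Matrix.of_apply, actBd, Matrix.mul_apply, Fintype.sum_prod_type,
    Matrix.transpose_apply]
  refine Finset.sum_congr rfl fun b' _ => ?_
  refine Finset.sum_congr rfl fun t' _ => ?_
  ring

lemma matOf_sub {α β γ δ : Type*} (h g : EuclideanSpace ℂ ((α × β) × (γ × δ))) :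
    matOf (h - g) = matOf h - matOf g := by
  ext p q
  simp [matOf, PiLp.sub_apply]

lemma inner_ampVec {N : ℕ} {n m : Fin N → ℕ} {d : ℕ} (Ω : BipH N n m)
    (Φ : EuclideanSpace ℂ (Fin d × Fin d)) :
    ⟪ampVec Ω Φ, ampVec Ω Φ⟫_ℂ = ⟪Ω, Ω⟫_ℂ * ⟪Φ, Φ⟫_ℂ := by
  simp only [PiLp.inner_apply, RCLike.inner_apply, ampVec]
  rw [Finset.sum_mul]
  refine Finset.sum_congr rfl fun k _ => ?_
  rw [Finset.sum_mul_sum, Fintype.sum_prod_type]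
  refine Finset.sum_congr rfl fun p1 _ => ?_
  refine Finset.sum_congr rfl fun p2 _ => ?_
  simp only [_root_.map_mul]
  ring

lemma transpose_mem_unitaryGroup {W : Matrix J J ℂ} (hW : W ∈ Matrix.unitaryGroup J ℂ) :
    Wᵀ ∈ Matrix.unitaryGroup J ℂ := by
  rw [mem_unitaryGroup_iff]
  have h := mem_unitaryGroup_iff'.mp hW
  rw [star_eq_conjTranspose] at h ⊢
  have hts : (Wᵀ)ᴴ = (Wᴴ)ᵀ := by
    ext i j
    simp [Matrix.conjTranspose_apply, Matrix.transpose_apply]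
  rw [hts, ← Matrix.transpose_mul, h, Matrix.transpose_one]

lemma trace_sandwich {P Q : Type*} [Fintype P] [Fintype Q] (M : Matrix P P ℂ)
    (Z : Matrix P Q ℂ) : trace (Zᴴ * (M * Z)) = trace (M * (Z * Zᴴ)) := by
  rw [← Matrix.mul_assoc, trace_mul_cycle, trace_mul_comm]

lemma trace_conj_comm {P : Type*} [Fintype P] (x u Q : Matrix P P ℂ) :
    trace ((star u * x * u) * Q) = trace (x * (u * Q * star u)) := by
  have h1 : (star u * x * u) * Q = star u * (x * (u * Q)) := by simp only [Matrix.mul_assoc]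
  rw [h1, trace_mul_comm]
  simp only [Matrix.mul_assoc]

end BipAux

open BipAux Matrix in
/-- Lemma `lem:omivine` for finite-dimensional bipartite systems: if a unitary
`u ∈ M_A ⊗ M_d(ℂ)` transforms the reduced state `ω_A ⊗ φ₀` to within `ε` of
`ω_A ⊗ ψ_{A'}` (in the norm of linear functionals on `M_A ⊗ M_d(ℂ)`, expressed here by
the bound `≤ ε·‖x‖` for every `x`), then there exists a unitary `v ∈ M_B ⊗ M_d(ℂ)` with
`‖Ω ⊗ Ψ - u_{AA'} v_{BB'} (Ω ⊗ e₀ ⊗ e₀)‖ ≤ √ε`. -/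
theorem exists_local_unitary_of_reduced_state_close
    (N : ℕ) (n m : Fin N → ℕ) (d : ℕ) (hd : 0 < d) (i0 : Fin d)
    (Ω : BipH N n m) (hΩ : ‖Ω‖ = 1)
    (Ψ : EuclideanSpace ℂ (Fin d × Fin d)) (hΨ : ‖Ψ‖ = 1)
    (u : Π k : Fin N, Matrix (Fin (n k) × Fin d) (Fin (n k) × Fin d) ℂ)
    (hu : ∀ k, u k ∈ Matrix.unitaryGroup (Fin (n k) × Fin d) ℂ)
    (ε : ℝ)
    (hclose : ∀ x : Π k : Fin N, Matrix (Fin (n k) × Fin d) (Fin (n k) × Fin d) ℂ,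
      ‖⟪ampVec Ω Ψ, actAd x (ampVec Ω Ψ)⟫_ℂ -
          ⟪ampVec Ω (EuclideanSpace.single (i0, i0) 1),
            actAd (star u * x * u) (ampVec Ω (EuclideanSpace.single (i0, i0) 1))⟫_ℂ‖
        ≤ ε * ‖x‖) :
    ∃ v : Π k : Fin N, Matrix (Fin (m k) × Fin d) (Fin (m k) × Fin d) ℂ,
      (∀ k, v k ∈ Matrix.unitaryGroup (Fin (m k) × Fin d) ℂ) ∧
      ‖ampVec Ω Ψ - actAd u (actBd v (ampVec Ω (EuclideanSpace.single (i0, i0) 1)))‖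
        ≤ Real.sqrt ε := by

  classical
  set ζ : AmpH N n m d := ampVec Ω (EuclideanSpace.single (i0, i0) 1) with hζdef
  set X : Π k : Fin N, Matrix (Fin (n k) × Fin d) (Fin (m k) × Fin d) ℂ :=
    fun k => matOf (ampVec Ω Ψ k) with hXdef
  set Z : Π k : Fin N, Matrix (Fin (n k) × Fin d) (Fin (m k) × Fin d) ℂ :=
    fun k => matOf (ζ k) with hZdef
  set Y : Π k : Fin N, Matrix (Fin (n k) × Fin d) (Fin (m k) × Fin d) ℂ :=
    fun k => u k * Z k with hYdef
  -- per-block unitaries and test matrices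
  have hblock : ∀ k, ∃ W ∈ Matrix.unitaryGroup (Fin (m k) × Fin d) ℂ,
      ∃ S : Matrix (Fin (n k) × Fin d) (Fin (n k) × Fin d) ℂ, ‖S‖ ≤ 1 ∧
      (trace ((X k - Y k * W)ᴴ * (X k - Y k * W))).re ≤
        (trace (S * (X k * (X k)ᴴ - Y k * (Y k)ᴴ))).re :=
    fun k => block_estimate (X k) (Y k)
  choose W hW S hS hineq using hblock
  -- the key trace identity for arbitrary test families
  have key : ∀ x : Π k : Fin N, Matrix (Fin (n k) × Fin d) (Fin (n k) × Fin d) ℂ,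
      ⟪ampVec Ω Ψ, actAd x (ampVec Ω Ψ)⟫_ℂ - ⟪ζ, actAd (star u * x * u) ζ⟫_ℂ
        = ∑ k, trace (x k * (X k * (X k)ᴴ - Y k * (Y k)ᴴ)) := by
    intro x
    have h1 : ⟪ampVec Ω Ψ, actAd x (ampVec Ω Ψ)⟫_ℂ =
        ∑ k, trace (x k * (X k * (X k)ᴴ)) := by
      rw [inner_eq_sum_trace]
      refine Finset.sum_congr rfl fun k _ => ?_
      rw [matOf_actAd, trace_sandwich]
    have h2 : ⟪ζ, actAd (star u * x * u) ζ⟫_ℂ =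
        ∑ k, trace (x k * (Y k * (Y k)ᴴ)) := by
      rw [inner_eq_sum_trace]
      refine Finset.sum_congr rfl fun k _ => ?_
      rw [matOf_actAd, trace_sandwich]
      have hx : (star u * x * u) k = star (u k) * x k * u k := rfl
      rw [hx, trace_conj_comm]
      have hY2 : Y k * (Y k)ᴴ = u k * (matOf (ζ k) * (matOf (ζ k))ᴴ) * star (u k) := by
        simp only [hYdef, hZdef]
        rw [conjTranspose_mul, star_eq_conjTranspose]
        simp only [Matrix.mul_assoc]
      rw [hY2]
    rw [h1, h2, ← Finset.sum_sub_distrib]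
    refine Finset.sum_congr rfl fun k _ => ?_
    rw [Matrix.mul_sub, trace_sub]
  -- norm of the test family
  have hSnorm : ‖S‖ ≤ 1 := (pi_norm_le_iff_of_nonneg zero_le_one).mpr hS
  -- total traces are 1
  have hXsum : ∑ k, trace (X k * (X k)ᴴ) = 1 := by
    have h1 : ⟪ampVec Ω Ψ, ampVec Ω Ψ⟫_ℂ = ∑ k, trace ((X k)ᴴ * X k) := by
      rw [inner_eq_sum_trace]
    rw [inner_ampVec, inner_self_eq_norm_sq_to_K, inner_self_eq_norm_sq_to_K, hΩ, hΨ] at h1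
    have h2 : ∑ k, trace (X k * (X k)ᴴ) = ∑ k, trace ((X k)ᴴ * X k) :=
      Finset.sum_congr rfl fun k _ => trace_mul_comm _ _
    rw [h2, ← h1]
    norm_num
  have hYsum : ∑ k, trace (Y k * (Y k)ᴴ) = 1 := by
    have h0 : ∀ k, trace (Y k * (Y k)ᴴ) = trace ((Z k)ᴴ * Z k) := by
      intro k
      rw [trace_mul_comm]
      have h1 : (Y k)ᴴ * Y k = (Z k)ᴴ * Z k := by
        simp only [hYdef]
        rw [conjTranspose_mul]
        calc (Z k)ᴴ * (u k)ᴴ * (u k * Z k)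
            = (Z k)ᴴ * (((u k)ᴴ * u k) * Z k) := by simp only [Matrix.mul_assoc]
          _ = (Z k)ᴴ * Z k := by
              rw [← star_eq_conjTranspose, mem_unitaryGroup_iff'.mp (hu k), Matrix.one_mul]
      rw [h1]
    have h2 : ⟪ζ, ζ⟫_ℂ = ∑ k, trace ((Z k)ᴴ * Z k) := by
      rw [inner_eq_sum_trace]
    rw [hζdef, inner_ampVec, inner_self_eq_norm_sq_to_K, hΩ] at h2
    have h3 : ⟪(EuclideanSpace.single (i0, i0) (1:ℂ)), EuclideanSpace.single (i0, i0) 1⟫_ℂ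
        = 1 := by
      simp [EuclideanSpace.inner_single_left, EuclideanSpace.single_apply]
    rw [h3] at h2
    calc ∑ k, trace (Y k * (Y k)ᴴ) = ∑ k, trace ((Z k)ᴴ * Z k) :=
          Finset.sum_congr rfl fun k _ => h0 k
      _ = 1 := by rw [← h2]; norm_num
  -- ε is nonnegative
  have hε0 : 0 ≤ ε := by
    have h0 := hclose 1
    rw [key 1] at h0
    have hzero : ∑ k, trace ((1 : Π k : Fin N,
        Matrix (Fin (n k) × Fin d) (Fin (n k) × Fin d) ℂ) k *
        (X k * (X k)ᴴ - Y k * (Y k)ᴴ)) = 0 := by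
      simp only [Pi.one_apply, Matrix.one_mul, trace_sub]
      rw [Finset.sum_sub_distrib, hXsum, hYsum, sub_self]
    rw [hzero, norm_zero] at h0
    by_contra hneg
    push_neg at hneg
    have h1norm : ‖(1 : Π k : Fin N, Matrix (Fin (n k) × Fin d) (Fin (n k) × Fin d) ℂ)‖ = 0 := by
      have := norm_nonneg (1 : Π k : Fin N, Matrix (Fin (n k) × Fin d) (Fin (n k) × Fin d) ℂ)
      nlinarith
    have h1z := norm_eq_zero.mp h1norm
    have hΩ0 : Ω = 0 := by
      ext k p
      have hempty : IsEmpty (Fin (n k)) := by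
        by_contra hne
        rw [not_isEmpty_iff] at hne
        obtain ⟨a⟩ := hne
        have h2 := congrFun (congrFun (congrFun h1z k) (a, i0)) (a, i0)
        simp [Matrix.one_apply] at h2
      exact (hempty.false p.1).elim
    rw [hΩ0, norm_zero] at hΩ
    exact zero_ne_one hΩ
  -- the candidate
  refine ⟨fun k => (W k)ᵀ, fun k => transpose_mem_unitaryGroup (hW k), ?_⟩
  have hgmat : ∀ k, matOf ((ampVec Ω Ψ - actAd u (actBd (fun k => (W k)ᵀ) ζ)) k) =
      X k - Y k * W k := by
    intro k
    have h0 : (ampVec Ω Ψ - actAd u (actBd (fun k => (W k)ᵀ) ζ)) k =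
        ampVec Ω Ψ k - (actAd u (actBd (fun k => (W k)ᵀ) ζ)) k := rfl
    rw [h0, matOf_sub, matOf_actAd, matOf_actBd, Matrix.transpose_transpose]
    simp only [hXdef, hYdef, hZdef, Matrix.mul_assoc]
  have hnorm2 : ‖ampVec Ω Ψ - actAd u (actBd (fun k => (W k)ᵀ) ζ)‖ ^ 2 =
      ∑ k, (trace ((X k - Y k * W k)ᴴ * (X k - Y k * W k))).re := by
    have h0 : ‖ampVec Ω Ψ - actAd u (actBd (fun k => (W k)ᵀ) ζ)‖ ^ 2 =
        RCLike.re ⟪ampVec Ω Ψ - actAd u (actBd (fun k => (W k)ᵀ) ζ),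
          ampVec Ω Ψ - actAd u (actBd (fun k => (W k)ᵀ) ζ)⟫_ℂ := norm_sq_eq_re_inner (𝕜 := ℂ) _
    rw [inner_eq_sum_trace] at h0
    rw [h0, RCLike.re_to_complex, Complex.re_sum]
    exact Finset.sum_congr rfl fun k _ => by rw [hgmat k]
  have htotal : ∑ k, (trace ((X k - Y k * W k)ᴴ * (X k - Y k * W k))).re ≤ ε := by
    have h1 : ∑ k, (trace ((X k - Y k * W k)ᴴ * (X k - Y k * W k))).re ≤
        ∑ k, (trace (S k * (X k * (X k)ᴴ - Y k * (Y k)ᴴ))).re :=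
      Finset.sum_le_sum fun k _ => hineq k
    have h3 := hclose S
    rw [key S] at h3
    have h4 : (∑ k, trace (S k * (X k * (X k)ᴴ - Y k * (Y k)ᴴ))).re ≤
        ‖∑ k, trace (S k * (X k * (X k)ᴴ - Y k * (Y k)ᴴ))‖ := Complex.re_le_norm _
    have h5 : ε * ‖S‖ ≤ ε := by nlinarith [norm_nonneg S]
    have h2 : ∑ k, (trace (S k * (X k * (X k)ᴴ - Y k * (Y k)ᴴ))).re =
        (∑ k, trace (S k * (X k * (X k)ᴴ - Y k * (Y k)ᴴ))).re := (Complex.re_sum _ _).symm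
    linarith
  have hfinal : ‖ampVec Ω Ψ - actAd u (actBd (fun k => (W k)ᵀ) ζ)‖ ^ 2 ≤ ε := by
    rw [hnorm2]; exact htotal
  calc ‖ampVec Ω Ψ - actAd u (actBd (fun k => (W k)ᵀ) ζ)‖
      = Real.sqrt (‖ampVec Ω Ψ - actAd u (actBd (fun k => (W k)ᵀ) ζ)‖ ^ 2) :=
        (Real.sqrt_sq (norm_nonneg _)).symm
    _ ≤ Real.sqrt ε := Real.sqrt_le_sqrt hfinal
end

section
/- For k ∈ (0, 2π) with k ≠ π, let ĥ(k) ∈ M₂(ℂ) be the matrix with entries ĥ(k)₁₁ = ĥ(k)₂₂ = 0, ĥ(k)₁₂ = 1 + exp(i k), ĥ(k)₂₁ = 1 + exp(-i k), and let P(k) ∈ M₂(ℂ) be the spectral projection of ĥ(k) onto its (unique) positive eigenvalue 2|cos(k/2)|. Then for k < π, P(k) has entries P(k)₁₁ = P(k)₂₂ = ½, P(k)₁₂ = ½ e^{ik/2}, P(k)₂₁ = ½ e^{-ik/2}, while for k > π, P(k)₁₁ = P(k)₂₂ = ½, P(k)₁₂ = -½ e^{ik/2}, P(k)₂₁ = -½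 e^{-ik/2}. Consequently the left limit of P at k = π equals ½·[[1, i],[-i, 1]], the right limit equals ½·[[1, -i],[i, 1]], and these are distinct, so P admits no continuous extension to k = π. -/
open Complex

/-- The momentum-space symbol of the SSH Hamiltonian:
`ĥ(k) = [[0, 1 + e^{ik}], [1 + e^{-ik}, 0]]`. -/
noncomputable def sshSymbol (k : ℝ) : Matrix (Fin 2) (Fin 2) ℂ :=
  !![0, 1 + Complex.exp (Complex.I * k); 1 + Complex.exp (-(Complex.I * k)), 0]

lemma ssh_one_add_exp (k : ℝ) : (1 : ℂ) + Complex.exp (Complex.I * k)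
    = 2 * (Real.cos (k/2) : ℂ) * Complex.exp (Complex.I * k / 2) := by
  have h1 : ((k:ℂ)/2) * Complex.I = Complex.I * k / 2 := by ring
  have h2 : (-((k:ℂ)/2)) * Complex.I = -(Complex.I * k / 2) := by ring
  have hc : 2 * (Real.cos (k/2) : ℂ)
      = Complex.exp (Complex.I * k / 2) + Complex.exp (-(Complex.I * k / 2)) := by
    rw [Complex.ofReal_cos, Complex.cos]; push_cast; rw [h1, h2]; ring
  have hE2 : Complex.exp (Complex.I * k)
      = Complex.exp (Complex.I * k / 2) * Complex.exp (Complex.I * k / 2) := by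
    rw [← Complex.exp_add]; ring_nf
  have hinv : Complex.exp (Complex.I * k / 2) * Complex.exp (-(Complex.I * k / 2)) = 1 := by
    rw [← Complex.exp_add]; ring_nf; exact Complex.exp_zero
  rw [hc, hE2]; linear_combination -hinv

lemma ssh_exp_conj_half (k : ℝ) :
    starRingEnd ℂ (Complex.exp (Complex.I * k / 2)) = Complex.exp (-(Complex.I * k) / 2) := by
  rw [← Complex.exp_conj]
  congr 1
  simp [map_div₀, map_mul, Complex.conj_I, Complex.conj_ofReal, map_ofNat]

lemma ssh_key (k : ℝ) (M : Matrix (Fin 2) (Fin 2) ℂ)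
    (hc : Real.cos (k/2) ≠ 0)
    (hH : M.IsHermitian) (hT : M.trace = 1)
    (hE : sshSymbol k * M = ((2 * |Real.cos (k / 2)| : ℝ) : ℂ) • M) :
    M = !![1/2, (Real.cos (k/2) / (2 * |Real.cos (k/2)|) : ℝ) * Complex.exp (Complex.I * k / 2);
           (Real.cos (k/2) / (2 * |Real.cos (k/2)|) : ℝ) * Complex.exp (-(Complex.I * k) / 2), 1/2] := by
  have hlam0 : (2 * |Real.cos (k/2)| : ℝ) ≠ 0 := by
    simp [abs_eq_zero, hc]
  have hlam0' : ((2 * |Real.cos (k/2)| : ℝ) : ℂ) ≠ 0 := by exact_mod_cast hlam0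
  have e1 : (1 + Complex.exp (Complex.I * k)) * M 1 0
      = ((2 * |Real.cos (k/2)| : ℝ) : ℂ) * M 0 0 := by
    have := congrFun (congrFun hE 0) 0
    simpa [sshSymbol, Matrix.mul_apply, Fin.sum_univ_two, smul_eq_mul] using this
  have e2 : (1 + Complex.exp (Complex.I * k)) * M 1 1
      = ((2 * |Real.cos (k/2)| : ℝ) : ℂ) * M 0 1 := by
    have := congrFun (congrFun hE 0) 1
    simpa [sshSymbol, Matrix.mul_apply, Fin.sum_univ_two, smul_eq_mul] using this
  have e4 : (1 + Complex.exp (-(Complex.I * k))) * M 0 1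
      = ((2 * |Real.cos (k/2)| : ℝ) : ℂ) * M 1 1 := by
    have := congrFun (congrFun hE 1) 1
    simpa [sshSymbol, Matrix.mul_apply, Fin.sum_univ_two, smul_eq_mul] using this
  have hcb : M 1 0 = starRingEnd ℂ (M 0 1) := by
    have := congrFun (congrFun hH.symm 1) 0
    simpa [Matrix.conjTranspose_apply] using this
  have hdr : starRingEnd ℂ (M 1 1) = M 1 1 := by
    have := congrFun (congrFun hH.symm 1) 1
    simpa [Matrix.conjTranspose_apply] using this.symm
  have htr : M 0 0 + M 1 1 = 1 := by
    simpa [Matrix.trace_fin_two] using hT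
  have e4' : (1 + Complex.exp (Complex.I * k)) * starRingEnd ℂ (M 0 1)
      = ((2 * |Real.cos (k/2)| : ℝ) : ℂ) * M 1 1 := by
    have := congrArg (starRingEnd ℂ) e4
    rw [map_mul, map_mul, map_add, map_one, ← Complex.exp_conj, hdr, Complex.conj_ofReal] at this
    simpa [map_neg, map_mul, Complex.conj_I, Complex.conj_ofReal] using this
  have had : M 0 0 = M 1 1 := by
    refine mul_left_cancel₀ hlam0' ?_
    rw [← e1, hcb, e4']
  have ha2 : M 0 0 = 1/2 := by
    have h : M 0 0 + M 0 0 = 1 := by rw [had] at htr ⊢; exact htr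
    linear_combination h/2
  have hd2 : M 1 1 = 1/2 := had ▸ ha2
  have hb : M 0 1 = ((Real.cos (k/2) / (2 * |Real.cos (k/2)|) : ℝ) : ℂ)
      * Complex.exp (Complex.I * k / 2) := by
    refine mul_left_cancel₀ hlam0' ?_
    rw [← e2, hd2, ssh_one_add_exp]
    have habs : ((|Real.cos (k/2)| : ℝ) : ℂ) ≠ 0 := by
      exact_mod_cast abs_ne_zero.mpr hc
    push_cast
    field_simp
  have hcval : M 1 0 = ((Real.cos (k/2) / (2 * |Real.cos (k/2)|) : ℝ) : ℂ)
      * Complex.exp (-(Complex.I * k) / 2) := by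
    rw [hcb, hb, map_mul, Complex.conj_ofReal, ssh_exp_conj_half]
  ext i j
  fin_cases i <;> fin_cases j <;>
    simp [ha2, hd2, hb, hcval]

/-- The discontinuity at `k = π` of the spectral projection of the SSH symbol onto its
positive eigenvalue `2|cos(k/2)|`.  Here `P : ℝ → M₂(ℂ)` is assumed, for every
`k ∈ (0, 2π)` with `k ≠ π`, to be the spectral projection onto the positive eigenvalue,
characterized as the Hermitian idempotent of trace one satisfying
`ĥ(k) P(k) = 2|cos(k/2)| P(k)`.  Then `P(k)` is given by the explicit formula
`½[[1, ±e^{ik/2}], [±e^{-ik/2}, 1]]` (sign `+` for `k < π`, `-` for `k > π`), the left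
and right limits at `π` are `½[[1, i], [-i, 1]]` and `½[[1, -i], [i, 1]]` respectively,
these are distinct, and `P` admits no continuous extension to `k = π`. -/
theorem ssh_positive_spectral_projection_discontinuous
    (P : ℝ → Matrix (Fin 2) (Fin 2) ℂ)
    (hP : ∀ k ∈ Set.Ioo (0:ℝ) (2 * Real.pi), k ≠ Real.pi →
      (P k).IsHermitian ∧ P k * P k = P k ∧ (P k).trace = 1 ∧
        sshSymbol k * P k = ((2 * |Real.cos (k / 2)| : ℝ) : ℂ) • P k) :
    (∀ k ∈ Set.Ioo (0:ℝ) Real.pi,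
        P k = !![1/2, (1/2) * Complex.exp (Complex.I * k / 2);
                 (1/2) * Complex.exp (-(Complex.I * k) / 2), 1/2]) ∧
      (∀ k ∈ Set.Ioo Real.pi (2 * Real.pi),
        P k = !![1/2, -((1/2) * Complex.exp (Complex.I * k / 2));
                 -((1/2) * Complex.exp (-(Complex.I * k) / 2)), 1/2]) ∧
      Filter.Tendsto P (nhdsWithin Real.pi (Set.Ioo (0:ℝ) Real.pi))
        (nhds !![1/2, Complex.I / 2; -(Complex.I / 2), 1/2]) ∧
      Filter.Tendsto P (nhdsWithin Real.pi (Set.Ioo Real.pi (2 * Real.pi)))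
        (nhds !![1/2, -(Complex.I / 2); Complex.I / 2, 1/2]) ∧
      (!![1/2, Complex.I / 2; -(Complex.I / 2), 1/2] : Matrix (Fin 2) (Fin 2) ℂ)
          ≠ !![1/2, -(Complex.I / 2); Complex.I / 2, 1/2] ∧
      ¬ ∃ Q : ℝ → Matrix (Fin 2) (Fin 2) ℂ, ContinuousAt Q Real.pi ∧
          ∀ k ∈ Set.Ioo (0:ℝ) (2 * Real.pi), k ≠ Real.pi → Q k = P k := by
  have hpi : (0:ℝ) < Real.pi := Real.pi_pos
  -- Part 1 : formula on (0, π)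
  have part1 : ∀ k ∈ Set.Ioo (0:ℝ) Real.pi,
      P k = !![1/2, (1/2) * Complex.exp (Complex.I * k / 2);
               (1/2) * Complex.exp (-(Complex.I * k) / 2), 1/2] := by
    intro k hk
    obtain ⟨hk0, hkpi⟩ := hk
    have hmem : k ∈ Set.Ioo (0:ℝ) (2 * Real.pi) := ⟨hk0, by linarith⟩
    have hne : k ≠ Real.pi := ne_of_lt hkpi
    obtain ⟨hH, _, hT, hE⟩ := hP k hmem hne
    have hcospos : 0 < Real.cos (k/2) := by
      apply Real.cos_pos_of_mem_Ioo
      constructor <;> [linarith [Real.pi_pos]; linarith]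
    have hcoef : (Real.cos (k/2) / (2 * |Real.cos (k/2)|) : ℝ) = 1/2 := by
      rw [abs_of_pos hcospos]; field_simp
    rw [ssh_key k (P k) (ne_of_gt hcospos) hH hT hE, hcoef]
    norm_num
  -- Part 2 : formula on (π, 2π)
  have part2 : ∀ k ∈ Set.Ioo Real.pi (2 * Real.pi),
      P k = !![1/2, -((1/2) * Complex.exp (Complex.I * k / 2));
               -((1/2) * Complex.exp (-(Complex.I * k) / 2)), 1/2] := by
    intro k hk
    obtain ⟨hkpi, hk2⟩ := hk
    have hmem : k ∈ Set.Ioo (0:ℝ) (2 * Real.pi) := ⟨by linarith, hk2⟩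
    have hne : k ≠ Real.pi := ne_of_gt hkpi
    obtain ⟨hH, _, hT, hE⟩ := hP k hmem hne
    have hcosneg : Real.cos (k/2) < 0 := by
      apply Real.cos_neg_of_pi_div_two_lt_of_lt <;> linarith
    have hcoef : (Real.cos (k/2) / (2 * |Real.cos (k/2)|) : ℝ) = -(1/2) := by
      rw [abs_of_neg hcosneg]; field_simp [ne_of_lt hcosneg]
    rw [ssh_key k (P k) (ne_of_lt hcosneg) hH hT hE, hcoef]
    norm_num
  -- the continuous candidate
  have hfc : Continuous fun k : ℝ =>
      (!![1/2, (1/2) * Complex.exp (Complex.I * k / 2);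
         (1/2) * Complex.exp (-(Complex.I * k) / 2), 1/2] : Matrix (Fin 2) (Fin 2) ℂ) := by
    apply continuous_matrix
    intro i j
    fin_cases i <;> fin_cases j <;> simp <;> fun_prop
  have hexp_pi : Complex.exp (Complex.I * (Real.pi : ℂ) / 2) = Complex.I := by
    rw [show Complex.I * (Real.pi:ℂ) / 2 = ((Real.pi:ℂ)/2) * Complex.I by ring,
      Complex.exp_mul_I]
    simp [Complex.cos_pi_div_two, Complex.sin_pi_div_two]
  have hexp_pi' : Complex.exp (-(Complex.I * (Real.pi : ℂ)) / 2) = -Complex.I := by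
    rw [show -(Complex.I * (Real.pi:ℂ)) / 2 = (-((Real.pi:ℂ)/2)) * Complex.I by ring,
      Complex.exp_mul_I, Complex.cos_neg, Complex.sin_neg]
    simp [Complex.cos_pi_div_two, Complex.sin_pi_div_two]
  have hfpi : (!![1/2, (1/2) * Complex.exp (Complex.I * (Real.pi:ℝ) / 2);
         (1/2) * Complex.exp (-(Complex.I * (Real.pi:ℝ)) / 2), 1/2] : Matrix (Fin 2) (Fin 2) ℂ)
      = !![1/2, Complex.I / 2; -(Complex.I / 2), 1/2] := by
    rw [hexp_pi, hexp_pi']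
    norm_num
    ring
  -- Part 3 : left limit
  have part3 : Filter.Tendsto P (nhdsWithin Real.pi (Set.Ioo (0:ℝ) Real.pi))
      (nhds !![1/2, Complex.I / 2; -(Complex.I / 2), 1/2]) := by
    have h1 : Filter.Tendsto (fun k : ℝ =>
        (!![1/2, (1/2) * Complex.exp (Complex.I * k / 2);
           (1/2) * Complex.exp (-(Complex.I * k) / 2), 1/2] : Matrix (Fin 2) (Fin 2) ℂ))
        (nhdsWithin Real.pi (Set.Ioo (0:ℝ) Real.pi))
        (nhds !![1/2, Complex.I / 2; -(Complex.I / 2), 1/2]) := by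
      rw [← hfpi]
      exact (hfc.tendsto Real.pi).mono_left nhdsWithin_le_nhds
    refine h1.congr' ?_
    filter_upwards [self_mem_nhdsWithin] with k hk
    exact (part1 k hk).symm
  -- Part 4 : right limit
  have part4 : Filter.Tendsto P (nhdsWithin Real.pi (Set.Ioo Real.pi (2 * Real.pi)))
      (nhds !![1/2, -(Complex.I / 2); Complex.I / 2, 1/2]) := by
    have hgc : Continuous fun k : ℝ =>
        (!![1/2, -((1/2) * Complex.exp (Complex.I * k / 2));
           -((1/2) * Complex.exp (-(Complex.I * k) / 2)), 1/2] : Matrix (Fin 2) (Fin 2) ℂ) := by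
      apply continuous_matrix
      intro i j
      fin_cases i <;> fin_cases j <;> simp <;> fun_prop
    have hgpi : (!![1/2, -((1/2) * Complex.exp (Complex.I * (Real.pi:ℝ) / 2));
           -((1/2) * Complex.exp (-(Complex.I * (Real.pi:ℝ)) / 2)), 1/2] : Matrix (Fin 2) (Fin 2) ℂ)
        = !![1/2, -(Complex.I / 2); Complex.I / 2, 1/2] := by
      rw [hexp_pi, hexp_pi']
      norm_num
      ring
    have h1 : Filter.Tendsto (fun k : ℝ =>
        (!![1/2, -((1/2) * Complex.exp (Complex.I * k / 2));
           -((1/2) * Complex.exp (-(Complex.I * k) / 2)), 1/2] : Matrix (Fin 2) (Fin 2) ℂ))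
        (nhdsWithin Real.pi (Set.Ioo Real.pi (2 * Real.pi)))
        (nhds !![1/2, -(Complex.I / 2); Complex.I / 2, 1/2]) := by
      rw [← hgpi]
      exact (hgc.tendsto Real.pi).mono_left nhdsWithin_le_nhds
    refine h1.congr' ?_
    filter_upwards [self_mem_nhdsWithin] with k hk
    exact (part2 k hk).symm
  -- Part 5 : distinctness
  have part5 : (!![1/2, Complex.I / 2; -(Complex.I / 2), 1/2] : Matrix (Fin 2) (Fin 2) ℂ)
      ≠ !![1/2, -(Complex.I / 2); Complex.I / 2, 1/2] := by
    intro h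
    have h01 : Complex.I / 2 = -(Complex.I / 2) := by
      simpa using congrFun (congrFun h 0) 1
    exact Complex.I_ne_zero (by linear_combination h01)
  refine ⟨part1, part2, part3, part4, part5, ?_⟩
  -- Part 6 : no continuous extension
  rintro ⟨Q, hQc, hQeq⟩
  have hleftNe : (nhdsWithin Real.pi (Set.Ioo (0:ℝ) Real.pi)).NeBot :=
    right_nhdsWithin_Ioo_neBot hpi
  have hrightNe : (nhdsWithin Real.pi (Set.Ioo Real.pi (2 * Real.pi))).NeBot :=
    left_nhdsWithin_Ioo_neBot (by linarith)
  have hQnhds : Filter.Tendsto Q (nhdsWithin Real.pi (Set.Ioo (0:ℝ) Real.pi))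
      (nhds (Q Real.pi)) := hQc.mono_left nhdsWithin_le_nhds
  have hQnhds' : Filter.Tendsto Q (nhdsWithin Real.pi (Set.Ioo Real.pi (2 * Real.pi)))
      (nhds (Q Real.pi)) := hQc.mono_left nhdsWithin_le_nhds
  have hQP_left : Filter.Tendsto Q (nhdsWithin Real.pi (Set.Ioo (0:ℝ) Real.pi))
      (nhds !![1/2, Complex.I / 2; -(Complex.I / 2), 1/2]) := by
    refine part3.congr' ?_
    filter_upwards [self_mem_nhdsWithin] with k hk
    exact (hQeq k ⟨hk.1, by linarith [hk.2]⟩ (ne_of_lt hk.2)).symm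
  have hQP_right : Filter.Tendsto Q (nhdsWithin Real.pi (Set.Ioo Real.pi (2 * Real.pi)))
      (nhds !![1/2, -(Complex.I / 2); Complex.I / 2, 1/2]) := by
    refine part4.congr' ?_
    filter_upwards [self_mem_nhdsWithin] with k hk
    exact (hQeq k ⟨by linarith [hk.1], hk.2⟩ (ne_of_gt hk.1)).symm
  have h1 : Q Real.pi = !![1/2, Complex.I / 2; -(Complex.I / 2), 1/2] :=
    tendsto_nhds_unique hQnhds hQP_left
  have h2 : Q Real.pi = !![1/2, -(Complex.I / 2); Complex.I / 2, 1/2] :=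
    tendsto_nhds_unique hQnhds' hQP_right
  exact part5 (h1 ▸ h2)
end
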